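/- arXiv:quant-ph/0407129 — 7 statements merged into one kernel-verified Lean document; each statement's English description precedes it below -/
import Mathlib

section
/- If S and S' are symplectic 2n×2n matrices and D is a positive definite diagonal matrix of the form diag(Λ,Λ) such that S^T D S = (S')^T D S', then U = S (S')^{-1} is a symplectic rotation, i.e. U is both symplectic and orthogonal. -/
open Matrix

/-- The standard symplectic matrix `J = [[0, I], [-I, 0]]`. -/
noncomputable def stdJ (n : ℕ) : Matrix (Fin n ⊕ Fin n) (Fin n ⊕ Fin n) ℝ :=
  Matrix.fromBlocks 0 1 (-1) 0

/-- A `2n×2n` real matrix is symplectic if `Sᵀ J S = J`. -/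
def IsSymplectic {n : ℕ} (S : Matrix (Fin n ⊕ Fin n) (Fin n ⊕ Fin n) ℝ) : Prop :=
  Sᵀ * stdJ n * S = stdJ n

lemma stdJ_sq (n : ℕ) : stdJ n * stdJ n = -1 := by
  simp only [stdJ, Matrix.fromBlocks_multiply]
  rw [← Matrix.fromBlocks_one, Matrix.fromBlocks_neg]
  norm_num

lemma isUnit_det_stdJ (n : ℕ) : IsUnit (stdJ n).det := by
  apply Matrix.isUnit_det_of_right_inverse (B := -(stdJ n))
  rw [Matrix.mul_neg, stdJ_sq]; simp

lemma symp_det {n : ℕ} {T : Matrix (Fin n ⊕ Fin n) (Fin n ⊕ Fin n) ℝ}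
    (hT : IsSymplectic T) : IsUnit T.det := by
  have h := congrArg Matrix.det hT
  rw [Matrix.det_mul, Matrix.det_mul, Matrix.det_transpose] at h
  have hJ := (isUnit_det_stdJ n).ne_zero
  have h1 : T.det * T.det = 1 := by
    have := mul_right_cancel₀ hJ
      (by linarith [h] : T.det * T.det * (stdJ n).det = 1 * (stdJ n).det)
    linarith
  exact IsUnit.of_mul_eq_one _ h1

/-- Abstract ring computation: if `j` commutes with `d`, `j² = -1` and
`j v d = d v j`, then `v` commutes with `d²`. -/
lemma ring_comm_sq {R : Type*} [Ring R] {j v d : R} (hjd : j * d = d * j)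
    (hj2 : j * j = -1) (hkey : j * v * d = d * v * j) : v * (d * d) = (d * d) * v := by
  have hvd : v * d = -(j * (d * v * j)) := by
    calc v * d = -(j * (j * v * d)) := by rw [show j * (j * v * d) = (j*j) * (v*d) by noncomm_ring, hj2]; noncomm_ring
      _ = -(j * (d * v * j)) := by rw [show j * v * d = d * v * j from hkey]
  calc v * (d * d) = -(j * (d * v * j)) * d := by rw [← hvd]; noncomm_ring
    _ = -(j * (d * (v * (j * d)))) := by noncomm_ring
    _ = -(j * (d * (v * d * j))) := by rw [hjd]; noncomm_ring
    _ = -(j * (d * (-(j * (d * v * j)) * j))) := by rw [hvd]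
    _ = j * ((d * j) * ((d * v) * (j * j))) := by noncomm_ring
    _ = j * ((j * d) * ((d * v) * (-1))) := by rw [← hjd, hj2]
    _ = (j * j) * (d * (d * v)) * (-1) := by noncomm_ring
    _ = (-1) * (d * (d * v)) * (-1) := by rw [hj2]
    _ = (d * d) * v := by noncomm_ring

lemma comm_of_comm_sq {m : Type*} [Fintype m] [DecidableEq m]
    (V : Matrix m m ℝ) (d : m → ℝ) (hd : ∀ i, 0 < d i)
    (h : V * Matrix.diagonal (fun i => d i * d i) = Matrix.diagonal (fun i => d i * d i) * V) :
    V * Matrix.diagonal d = Matrix.diagonal d * V := by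
  ext i j
  have hij := congrFun (congrFun h i) j
  simp only [Matrix.mul_diagonal, Matrix.diagonal_mul] at hij ⊢
  have h1 : V i j * (d j - d i) * (d j + d i) = 0 := by linear_combination hij
  have h2 : V i j * (d j - d i) = 0 :=
    (mul_eq_zero.mp h1).resolve_right (add_pos (hd j) (hd i)).ne'
  linear_combination h2

/-- if `S, S'` are symplectic and `D = diag(Λ, Λ)` is positive definite
diagonal with `Sᵀ D S = S'ᵀ D S'`, then `U = S * S'⁻¹` is both symplectic and
orthogonal. -/
theorem quantum_blobs_stmt0 {n : ℕ}
    (S S' : Matrix (Fin n ⊕ Fin n) (Fin n ⊕ Fin n) ℝ)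
    (hS : IsSymplectic S) (hS' : IsSymplectic S')
    (Λ : Fin n → ℝ) (hΛ : ∀ j, 0 < Λ j)
    (D : Matrix (Fin n ⊕ Fin n) (Fin n ⊕ Fin n) ℝ)
    (hD : D = Matrix.fromBlocks (Matrix.diagonal Λ) 0 0 (Matrix.diagonal Λ))
    (h : Sᵀ * D * S = S'ᵀ * D * S') :
    IsSymplectic (S * S'⁻¹) ∧ (S * S'⁻¹)ᵀ * (S * S'⁻¹) = 1 := by
  set J := stdJ n with hJdef
  have hS'det : IsUnit S'.det := symp_det hS'
  have hS'i : S' * S'⁻¹ = 1 := Matrix.mul_nonsing_inv _ hS'det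
  set U := S * S'⁻¹ with hUdef
  -- U is symplectic
  have hUsymp : IsSymplectic U := by
    show Uᵀ * J * U = J
    have e : Uᵀ * J * U = (S'⁻¹)ᵀ * (Sᵀ * J * S) * S'⁻¹ := by
      simp only [hUdef, Matrix.transpose_mul, Matrix.mul_assoc]
    rw [e, hS]
    calc (S'⁻¹)ᵀ * J * S'⁻¹ = (S'⁻¹)ᵀ * (S'ᵀ * J * S') * S'⁻¹ := by rw [hS']
      _ = (S' * S'⁻¹)ᵀ * J * (S' * S'⁻¹) := by
          simp only [Matrix.transpose_mul, Matrix.mul_assoc]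
      _ = J := by rw [hS'i]; simp
  -- U preserves D
  have hUD : Uᵀ * D * U = D := by
    have e : Uᵀ * D * U = (S'⁻¹)ᵀ * (Sᵀ * D * S) * S'⁻¹ := by
      simp only [hUdef, Matrix.transpose_mul, Matrix.mul_assoc]
    rw [e, h]
    calc (S'⁻¹)ᵀ * (S'ᵀ * D * S') * S'⁻¹ = (S' * S'⁻¹)ᵀ * D * (S' * S'⁻¹) := by
          simp only [Matrix.transpose_mul, Matrix.mul_assoc]
      _ = D := by rw [hS'i]; simp
  have hUdet : IsUnit U.det := symp_det hUsymp
  have hUi : U * U⁻¹ = 1 := Matrix.mul_nonsing_inv _ hUdet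
  have hUi' : U⁻¹ * U = 1 := Matrix.nonsing_inv_mul _ hUdet
  -- J commutes with D
  have hJD : J * D = D * J := by
    simp only [hJdef, hD, stdJ, Matrix.fromBlocks_multiply]
    norm_num
  have hJ2 : J * J = -1 := stdJ_sq n
  set V := U⁻¹ with hVdef
  have hUtJ : Uᵀ * J = J * V := by
    calc Uᵀ * J = (Uᵀ * J * U) * V := by rw [Matrix.mul_assoc, Matrix.mul_assoc, hUi, Matrix.mul_one]
      _ = J * V := by rw [hUsymp]
  have hUtD : Uᵀ * D = D * V := by
    calc Uᵀ * D = (Uᵀ * D * U) * V := by rw [Matrix.mul_assoc, Matrix.mul_assoc, hUi, Matrix.mul_one]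
      _ = D * V := by rw [hUD]
  -- key relation J V D = D V J
  have hkey : J * V * D = D * V * J := by
    have h1 : Uᵀ = -(J * V * J) := by
      calc Uᵀ = Uᵀ * -(J * J) := by rw [hJ2]; simp
        _ = -(Uᵀ * J * J) := by simp [Matrix.mul_assoc]
        _ = -(J * V * J) := by rw [hUtJ]
    have h2 : -(J * V * J) * D = D * V := by rw [← h1]; exact hUtD
    calc J * V * D = -(J * V * J) * (J * D) := by
          rw [show -(J * V * J) * (J * D) = -((J * V) * ((J * J) * D)) by noncomm_ring, hJ2]
          noncomm_ring
      _ = -(J * V * J) * (D * J) := by rw [hJD]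
      _ = (-(J * V * J) * D) * J := by noncomm_ring
      _ = D * V * J := by rw [h2]
  -- V commutes with D² hence with D
  have hcomm2 : V * (D * D) = (D * D) * V := ring_comm_sq hJD hJ2 hkey
  have hVD : V * D = D * V := by
    have hDd : D = Matrix.diagonal (Sum.elim Λ Λ) := by
      rw [hD, Matrix.fromBlocks_diagonal]
    have hpos : ∀ i, 0 < Sum.elim Λ Λ i := by rintro (i | i) <;> exact hΛ i
    have hDD : D * D = Matrix.diagonal (fun i => Sum.elim Λ Λ i * Sum.elim Λ Λ i) := by
      rw [hDd, Matrix.diagonal_mul_diagonal]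
    rw [hDd]
    refine comm_of_comm_sq V _ hpos ?_
    rw [← hDD]
    exact hcomm2
  -- conclude
  refine ⟨hUsymp, ?_⟩
  have hUDc : U * D = D * U := by
    calc U * D = U * D * (V * U) := by rw [hUi']; simp [Matrix.mul_assoc]
      _ = U * (D * V) * U := by simp only [Matrix.mul_assoc]
      _ = U * (V * D) * U := by rw [hVD]
      _ = (U * V) * (D * U) := by simp only [Matrix.mul_assoc]
      _ = D * U := by rw [hUi]; simp
  have hfin : (Uᵀ * U) * D = D := by
    calc (Uᵀ * U) * D = Uᵀ * (U * D) := by simp only [Matrix.mul_assoc]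
      _ = Uᵀ * (D * U) := by rw [hUDc]
      _ = (Uᵀ * D) * U := by simp only [Matrix.mul_assoc]
      _ = D * V * U := by rw [hUtD]
      _ = D := by rw [Matrix.mul_assoc, hUi', Matrix.mul_one]
  have hDdet : IsUnit D.det := by
    rw [hD, Matrix.fromBlocks_diagonal, Matrix.det_diagonal]
    refine isUnit_iff_ne_zero.mpr (ne_of_gt (Finset.prod_pos ?_))
    rintro (i | i) _ <;> exact hΛ i
  calc Uᵀ * U = (Uᵀ * U * D) * D⁻¹ := by
        rw [Matrix.mul_assoc, Matrix.mul_nonsing_inv _ hDdet, Matrix.mul_one]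
    _ = D * D⁻¹ := by rw [hfin]
    _ = 1 := Matrix.mul_nonsing_inv _ hDdet
end

section
/- If S is a symmetric positive definite symplectic matrix, then its positive definite square root S^{1/2} is also symplectic. -/
open Matrix

lemma stdJ_transpose (n : ℕ) : (stdJ n)ᵀ = -stdJ n := by
  simp [stdJ, Matrix.fromBlocks_transpose, Matrix.fromBlocks_neg]

lemma stdJ_mul_transpose (n : ℕ) : stdJ n * (stdJ n)ᵀ = 1 := by
  rw [stdJ_transpose]
  simp [stdJ, Matrix.fromBlocks_multiply, Matrix.fromBlocks_neg, ← Matrix.fromBlocks_one]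

/-- if `S` is symmetric positive definite symplectic, then its
(unique) positive definite square root `R` (i.e. `R` positive definite symmetric
with `R * R = S`) is also symplectic. -/
theorem quantum_blobs_stmt4 {n : ℕ}
    (S R : Matrix (Fin n ⊕ Fin n) (Fin n ⊕ Fin n) ℝ)
    (hSsymp : IsSymplectic S) (hS : S.PosDef) (hSsym : Sᵀ = S)
    (hR : R.PosDef) (hRsym : Rᵀ = R) (hRR : R * R = S) :
    IsSymplectic R := by
  set J := stdJ n with hJ
  have hJT : Jᵀ = -J := stdJ_transpose n
  have hJJT : J * Jᵀ = 1 := stdJ_mul_transpose n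
  have hJTJ : Jᵀ * J = 1 := by
    rw [hJT] at hJJT ⊢
    rw [Matrix.neg_mul]; rw [Matrix.mul_neg] at hJJT
    rw [neg_eq_iff_eq_neg] at hJJT
    rw [hJJT, neg_neg]
  -- S⁻¹ = Jᵀ * S * J
  have hRinv : R * R⁻¹ = 1 := Matrix.mul_nonsing_inv R hR.det_pos.ne'.isUnit
  have hSinv : S⁻¹ = Jᵀ * S * J := by
    apply Matrix.inv_eq_right_inv
    have h1 : S * Jᵀ * S = Jᵀ := by
      have := congrArg Matrix.transpose hSsymp
      simpa [Matrix.transpose_mul, hSsym, hJ, mul_assoc] using this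
    calc S * (Jᵀ * S * J) = (S * Jᵀ * S) * J := by noncomm_ring
    _ = Jᵀ * J := by rw [h1]
    _ = 1 := hJTJ
  -- the two candidate square roots of S⁻¹
  have hA : (Jᵀ * R * J).PosSemidef := by
    have := hR.posSemidef.conjTranspose_mul_mul_same J
    rwa [Matrix.conjTranspose_eq_transpose_of_trivial] at this
  have hB : (R⁻¹).PosSemidef := hR.inv.posSemidef
  have hsq : (Jᵀ * R * J) ^ 2 = (R⁻¹) ^ 2 := by
    have h1 : (Jᵀ * R * J) ^ 2 = Jᵀ * S * J := by
      rw [pow_two]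
      calc Jᵀ * R * J * (Jᵀ * R * J) = Jᵀ * R * (J * Jᵀ) * R * J := by noncomm_ring
      _ = Jᵀ * (R * R) * J := by rw [hJJT]; noncomm_ring
      _ = Jᵀ * S * J := by rw [hRR]
    have h2 : (R⁻¹) ^ 2 = S⁻¹ := by
      rw [pow_two, ← hRR, Matrix.mul_inv_rev]
    rw [h1, h2, hSinv]
  have key : Jᵀ * R * J = R⁻¹ := by
    open scoped MatrixOrder in
    exact (CFC.sq_eq_sq_iff _ _ hA.nonneg hB.nonneg).1 hsq
  -- conclude
  have : R * (Jᵀ * R * J) = 1 := by rw [key]; exact hRinv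
  have h4 : R * Jᵀ * R = Jᵀ := by
    have h5 : R * Jᵀ * R * J = 1 := by rw [← this]; noncomm_ring
    calc R * Jᵀ * R = R * Jᵀ * R * (J * Jᵀ) := by rw [hJJT, mul_one]
    _ = (R * Jᵀ * R * J) * Jᵀ := by noncomm_ring
    _ = Jᵀ := by rw [h5, one_mul]
  -- from R * (-J) * R = -J get R * J * R = J
  unfold IsSymplectic
  rw [hRsym, ← hJ]
  rw [hJT] at h4
  have := congrArg Neg.neg h4
  simpa [Matrix.mul_neg, Matrix.neg_mul] using this
end

section
/- Let M, M' be symmetric positive definite 2n×2n matrices with M ≤ M' (i.e. M' − M positive semidefinite). Then the eigenvalues of (JM)^2 are less than or equal to the corresponding eigenvalues of (JM')^2 when both are arranged in increasing order; equivalently, the symplectic spectra satisfy Spec_ω(M) ≤ Spec_ω(M') termwise. -/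
open Matrix

open Complex

namespace QB8

variable {n : ℕ}

/-- complexification -/
noncomputable def cm (A : Matrix (Fin n ⊕ Fin n) (Fin n ⊕ Fin n) ℝ) :
    Matrix (Fin n ⊕ Fin n) (Fin n ⊕ Fin n) ℂ := A.map Complex.ofRealHom

/-- test vectors -/
def wv (n : ℕ) (ε : ℂ) (k : Fin n) : (Fin n ⊕ Fin n) → ℂ
  | Sum.inl i => if i = k then 1 else 0
  | Sum.inr i => if i = k then ε else 0

/-- block diagonal -/
noncomputable def Dm (f : Fin n → ℝ) : Matrix (Fin n ⊕ Fin n) (Fin n ⊕ Fin n) ℝ :=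
  Matrix.fromBlocks (Matrix.diagonal f) 0 0 (Matrix.diagonal f)

lemma cm_mul (A B : Matrix (Fin n ⊕ Fin n) (Fin n ⊕ Fin n) ℝ) :
    cm (A * B) = cm A * cm B := Matrix.map_mul

lemma cm_one : cm (1 : Matrix (Fin n ⊕ Fin n) (Fin n ⊕ Fin n) ℝ) = 1 := Matrix.map_one _ (map_zero _) (map_one _)

lemma cm_transpose (A : Matrix (Fin n ⊕ Fin n) (Fin n ⊕ Fin n) ℝ) :
    cm Aᵀ = (cm A)ᵀ := by ext p q; simp [cm]

lemma cm_conjTranspose (A : Matrix (Fin n ⊕ Fin n) (Fin n ⊕ Fin n) ℝ) :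
    (cm A)ᴴ = cm Aᵀ := by
  ext p q
  simp [cm, Matrix.conjTranspose_apply, Matrix.transpose_apply, Complex.conj_ofReal]

lemma star_wv (ε : ℂ) (k : Fin n) : star (wv n ε k) = wv n (star ε) k := by
  funext p
  cases p with
  | inl i => simp [wv, apply_ite (star : ℂ → ℂ)]
  | inr i => simp [wv, apply_ite (star : ℂ → ℂ)]

lemma row_sum (c : ℂ) (i : Fin n) (w : Fin n → ℂ) :
    (∑ j, (if i = j then c else 0) * w j) = c * w i := by
  rw [Finset.sum_eq_single i (fun j _ hj => by simp [Ne.symm hj]) (by simp)]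
  simp

lemma dot_wv (ε ε' : ℂ) (k l : Fin n) :
    star (wv n ε k) ⬝ᵥ wv n ε' l = if k = l then 1 + star ε * ε' else 0 := by
  rw [star_wv]
  simp only [dotProduct, Fintype.sum_sum_type, wv]
  rcases eq_or_ne k l with h | h
  · subst h
    rw [Finset.sum_eq_single k (fun i _ hi => by simp [hi]) (by simp),
        Finset.sum_eq_single k (fun i _ hi => by simp [hi]) (by simp)]
    simp
  · have e1 : (∑ x : Fin n, (if x = k then (1:ℂ) else 0) * if x = l then 1 else 0) = 0 :=
      Finset.sum_eq_zero (fun i _ => by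
        rcases eq_or_ne i k with hk | hk
        · subst hk; simp [h]
        · simp [hk])
    have e2 : (∑ x : Fin n, (if x = k then star ε else 0) * if x = l then ε' else 0) = 0 :=
      Finset.sum_eq_zero (fun i _ => by
        rcases eq_or_ne i k with hk | hk
        · subst hk; simp [h]
        · simp [hk])
    rw [e1, e2, add_zero, if_neg h]

lemma Dm_mulVec (f : Fin n → ℝ) (ε : ℂ) (k : Fin n) :
    cm (Dm f) *ᵥ wv n ε k = (f k : ℂ) • wv n ε k := by
  funext p
  cases p with
  | inl i =>
    simp only [Matrix.mulVec, dotProduct, Fintype.sum_sum_type, cm, Dm, Matrix.map_apply,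
      Matrix.fromBlocks_apply₁₁, Matrix.fromBlocks_apply₁₂, Matrix.diagonal_apply,
      Matrix.zero_apply, wv, Pi.smul_apply, smul_eq_mul]
    rw [Finset.sum_eq_single i (fun j _ hj => by simp [Ne.symm hj]) (by simp)]
    rcases eq_or_ne i k with h | h <;> simp [h]
  | inr i =>
    simp only [Matrix.mulVec, dotProduct, Fintype.sum_sum_type, cm, Dm, Matrix.map_apply,
      Matrix.fromBlocks_apply₂₁, Matrix.fromBlocks_apply₂₂, Matrix.diagonal_apply,
      Matrix.zero_apply, wv, Pi.smul_apply, smul_eq_mul]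
    rw [Finset.sum_eq_single i (fun j _ hj => by simp [Ne.symm hj]) (by simp)]
    rcases eq_or_ne i k with h | h <;> simp [h]

lemma J_mulVec (ε : ℂ) (hε : ε * ε = -1) (k : Fin n) :
    cm (stdJ n) *ᵥ wv n ε k = ε • wv n ε k := by
  funext p
  cases p with
  | inl i =>
    have e1 : ∀ j, (Complex.ofRealHom ((stdJ n) (Sum.inl i) (Sum.inl j)) : ℂ) = 0 := fun j => by
      simp [stdJ]
    have e2 : ∀ j, (Complex.ofRealHom ((stdJ n) (Sum.inl i) (Sum.inr j)) : ℂ)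
        = if i = j then 1 else 0 := fun j => by
      simp [stdJ, Matrix.one_apply, apply_ite Complex.ofRealHom]
    simp only [Matrix.mulVec, dotProduct, Fintype.sum_sum_type, cm, Matrix.map_apply, e1, e2,
      zero_mul, Finset.sum_const_zero, zero_add, row_sum, Pi.smul_apply, smul_eq_mul, wv]
    split_ifs <;> simp
  | inr i =>
    have e1 : ∀ j, (Complex.ofRealHom ((stdJ n) (Sum.inr i) (Sum.inl j)) : ℂ)
        = if i = j then -1 else 0 := fun j => by
      simp only [stdJ, Matrix.fromBlocks_apply₂₁, Matrix.neg_apply, Matrix.one_apply, map_neg,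
        apply_ite Complex.ofRealHom, _root_.map_one, _root_.map_zero, neg_neg, ofRealHom_eq_coe]
      split_ifs <;> simp
    have e2 : ∀ j, (Complex.ofRealHom ((stdJ n) (Sum.inr i) (Sum.inr j)) : ℂ) = 0 := fun j => by
      simp [stdJ]
    simp only [Matrix.mulVec, dotProduct, Fintype.sum_sum_type, cm, Matrix.map_apply, e1, e2,
      zero_mul, Finset.sum_const_zero, add_zero, row_sum, Pi.smul_apply, smul_eq_mul, wv]
    split_ifs <;> simp [hε]

lemma J_mul_Jt : stdJ n * (stdJ n)ᵀ = 1 := by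
  simp [stdJ, Matrix.fromBlocks_transpose, Matrix.fromBlocks_multiply]

lemma det_J_ne_zero : (stdJ n).det ≠ 0 := by
  intro h
  have := congrArg Matrix.det (J_mul_Jt (n := n))
  rw [Matrix.det_mul, Matrix.det_transpose, Matrix.det_one, h, mul_zero] at this
  exact zero_ne_one this

lemma isUnit_det {S : Matrix (Fin n ⊕ Fin n) (Fin n ⊕ Fin n) ℝ} (hS : IsSymplectic S) :
    IsUnit S.det := by
  have := congrArg Matrix.det hS
  rw [Matrix.det_mul, Matrix.det_mul, Matrix.det_transpose] at this
  have h2 : S.det * S.det * (stdJ n).det = (stdJ n).det := by ring_nf; ring_nf at this; linarith [this]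
  have h3 : S.det * S.det = 1 := by
    have := mul_right_cancel₀ (det_J_ne_zero) (h2.trans (one_mul _).symm)
    exact this
  exact IsUnit.of_mul_eq_one _ h3

lemma J_mul_inv {S : Matrix (Fin n ⊕ Fin n) (Fin n ⊕ Fin n) ℝ} (hS : IsSymplectic S) :
    stdJ n * S⁻¹ = Sᵀ * stdJ n := by
  have h := Matrix.mul_nonsing_inv S (isUnit_det hS)
  calc stdJ n * S⁻¹ = (Sᵀ * stdJ n * S) * S⁻¹ := by rw [hS]
    _ = Sᵀ * stdJ n * (S * S⁻¹) := by rw [Matrix.mul_assoc]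
    _ = Sᵀ * stdJ n := by rw [h, Matrix.mul_one]

/-- The eigenvector candidates. -/
noncomputable def xv (S : Matrix (Fin n ⊕ Fin n) (Fin n ⊕ Fin n) ℝ) (ε : ℂ) (k : Fin n) :
    (Fin n ⊕ Fin n) → ℂ := cm S⁻¹ *ᵥ wv n ε k

lemma reduce {S : Matrix (Fin n ⊕ Fin n) (Fin n ⊕ Fin n) ℝ} (hS : IsSymplectic S)
    (w v : (Fin n ⊕ Fin n) → ℂ) :
    star (cm S⁻¹ *ᵥ w) ⬝ᵥ (cm Sᵀ *ᵥ v) = star w ⬝ᵥ v := by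
  rw [Matrix.star_mulVec, Matrix.dotProduct_mulVec, Matrix.vecMul_vecMul,
    cm_conjTranspose, ← cm_mul]
  have : (S⁻¹)ᵀ * Sᵀ = 1 := by
    rw [← Matrix.transpose_mul, Matrix.mul_nonsing_inv S (isUnit_det hS), Matrix.transpose_one]
  rw [this, cm_one, Matrix.vecMul_one]

lemma Sc_mul_Rc {S : Matrix (Fin n ⊕ Fin n) (Fin n ⊕ Fin n) ℝ} (hS : IsSymplectic S) :
    cm S * cm S⁻¹ = 1 := by
  rw [← cm_mul, Matrix.mul_nonsing_inv S (isUnit_det hS), cm_one]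

lemma pairM {S : Matrix (Fin n ⊕ Fin n) (Fin n ⊕ Fin n) ℝ} (hS : IsSymplectic S)
    (f : Fin n → ℝ) (ε ε' : ℂ) (k l : Fin n) :
    star (xv S ε k) ⬝ᵥ (cm (Sᵀ * Dm f * S) *ᵥ xv S ε' l)
      = if k = l then (1 + star ε * ε') * (f k : ℂ) else 0 := by
  have h1 : cm (Sᵀ * Dm f * S) *ᵥ xv S ε' l = cm Sᵀ *ᵥ ((f l : ℂ) • wv n ε' l) := by
    rw [xv, Matrix.mulVec_mulVec, cm_mul, cm_mul, Matrix.mul_assoc (cm Sᵀ * cm (Dm f)),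
      Sc_mul_Rc hS, Matrix.mul_one, ← Matrix.mulVec_mulVec, Dm_mulVec]
  rw [h1, Matrix.mulVec_smul, dotProduct_smul, xv, reduce hS, dot_wv]
  split_ifs with h
  · subst h; rw [smul_eq_mul]; ring
  · simp

lemma pairH {S : Matrix (Fin n ⊕ Fin n) (Fin n ⊕ Fin n) ℝ} (hS : IsSymplectic S)
    (ε ε' : ℂ) (hε' : ε' * ε' = -1) (k l : Fin n) :
    star (xv S ε k) ⬝ᵥ ((Complex.I • cm (stdJ n)) *ᵥ xv S ε' l)
      = if k = l then Complex.I * ε' * (1 + star ε * ε') else 0 := by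
  have h1 : cm (stdJ n) *ᵥ xv S ε' l = cm Sᵀ *ᵥ (ε' • wv n ε' l) := by
    rw [xv, Matrix.mulVec_mulVec, ← cm_mul, J_mul_inv hS, cm_mul, ← Matrix.mulVec_mulVec,
      J_mulVec ε' hε']
  rw [Matrix.smul_mulVec, h1, Matrix.mulVec_smul, dotProduct_smul,
    dotProduct_smul, xv, reduce hS, dot_wv]
  split_ifs with h
  · subst h; rw [smul_eq_mul, smul_eq_mul]; ring
  · simp

lemma sum_dotProduct' {ι : Type} (s : Finset ι) (f : ι → (Fin n ⊕ Fin n) → ℂ)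
    (w : (Fin n ⊕ Fin n) → ℂ) : (∑ i ∈ s, f i) ⬝ᵥ w = ∑ i ∈ s, f i ⬝ᵥ w := by
  simp only [dotProduct, Finset.sum_apply, Finset.sum_mul]
  exact Finset.sum_comm

lemma dotProduct_sum' {ι : Type} (s : Finset ι) (w : (Fin n ⊕ Fin n) → ℂ)
    (f : ι → (Fin n ⊕ Fin n) → ℂ) : w ⬝ᵥ (∑ i ∈ s, f i) = ∑ i ∈ s, w ⬝ᵥ f i := by
  simp only [dotProduct, Finset.sum_apply, Finset.mul_sum]
  exact Finset.sum_comm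

lemma quad_eval {ι : Type} [Fintype ι] [DecidableEq ι]
    (N : Matrix (Fin n ⊕ Fin n) (Fin n ⊕ Fin n) ℂ) (v : ι → (Fin n ⊕ Fin n) → ℂ)
    (cf : ι → ℂ) (μ : ι → ℝ)
    (h : ∀ i i', star (v i) ⬝ᵥ (N *ᵥ v i') = if i = i' then (μ i : ℂ) else 0) :
    star (∑ i, cf i • v i) ⬝ᵥ (N *ᵥ ∑ i, cf i • v i)
      = ((∑ i, Complex.normSq (cf i) * μ i : ℝ) : ℂ) := by
  have hmv : N *ᵥ (∑ i, cf i • v i) = ∑ i, cf i • (N *ᵥ v i) := by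
    rw [show N *ᵥ (∑ i, cf i • v i) = N.mulVecLin (∑ i, cf i • v i) from rfl, map_sum]
    simp [Matrix.mulVecLin]
  rw [hmv, star_sum]
  rw [sum_dotProduct' Finset.univ]
  have : ∀ i, star (cf i • v i) ⬝ᵥ (∑ i', cf i' • (N *ᵥ v i'))
      = Complex.normSq (cf i) * μ i := by
    intro i
    rw [dotProduct_sum' Finset.univ]
    rw [Finset.sum_eq_single i (fun i' _ hi' => ?_) (by simp)]
    · rw [star_smul, smul_dotProduct, dotProduct_smul, h i i, if_pos rfl]
      rw [smul_eq_mul, smul_eq_mul, star_def, ← mul_assoc,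
        mul_comm ((starRingEnd ℂ) (cf i)) (cf i), Complex.mul_conj]
      all_goals push_cast; ring
    · rw [star_smul, smul_dotProduct, dotProduct_smul, h i i', if_neg (Ne.symm hi')]
      simp
  rw [Finset.sum_congr rfl (fun i _ => this i)]
  push_cast
  ring

open scoped ComplexOrder in
lemma S_mulVec_sum {S : Matrix (Fin n ⊕ Fin n) (Fin n ⊕ Fin n) ℝ} (hS : IsSymplectic S)
    (cf : Fin n → ℂ) (ε : ℂ) :
    cm S *ᵥ (∑ k, cf k • xv S ε k) = ∑ k, cf k • wv n ε k := by
  rw [show cm S *ᵥ (∑ k, cf k • xv S ε k) = (cm S).mulVecLin (∑ k, cf k • xv S ε k) from rfl,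
    map_sum]
  refine Finset.sum_congr rfl (fun k _ => ?_)
  rw [_root_.map_smul, Matrix.mulVecLin_apply, xv, Matrix.mulVec_mulVec, Sc_mul_Rc hS,
    Matrix.one_mulVec]

open scoped ComplexOrder MatrixOrder in
lemma cm_posSemidef {A : Matrix (Fin n ⊕ Fin n) (Fin n ⊕ Fin n) ℝ} (hA : A.PosSemidef) :
    (cm A).PosSemidef := by
  have hC : (CFC.sqrt A).PosSemidef := by
    exact Matrix.nonneg_iff_posSemidef.mp (CFC.sqrt_nonneg A)
  have hmul : CFC.sqrt A * CFC.sqrt A = A := by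
    exact CFC.sqrt_mul_sqrt_self A (Matrix.nonneg_iff_posSemidef.mpr hA)
  have hherm : (cm (CFC.sqrt A))ᴴ = cm (CFC.sqrt A) := by
    ext p q
    have hsym : CFC.sqrt A p q = CFC.sqrt A q p := by
      conv_lhs => rw [← hC.1]
      simp [Matrix.conjTranspose_apply]
    simp [cm, Matrix.conjTranspose_apply, Complex.conj_ofReal, hsym]
  have key : cm A = (cm (CFC.sqrt A))ᴴ * cm (CFC.sqrt A) := by rw [hherm, ← cm_mul, hmul]
  rw [key]
  exact Matrix.posSemidef_conjTranspose_mul_self _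

lemma cm_sub (A B : Matrix (Fin n ⊕ Fin n) (Fin n ⊕ Fin n) ℝ) :
    cm (A - B) = cm A - cm B := by
  ext p q; simp [cm]

end QB8

open scoped ComplexOrder in
/-- monotonicity of the symplectic spectrum. If `M ≤ M'` (Loewner
order) are symmetric positive definite and `d`, `d'` are their symplectic
spectra arranged in decreasing order (exhibited through Williamson
diagonalizations `M = Sᵀ diag(d,d) S`, `M' = S'ᵀ diag(d',d') S'`), then
`d j ≤ d' j` for every `j`. -/
theorem quantum_blobs_stmt8 {n : ℕ}
    (M M' : Matrix (Fin n ⊕ Fin n) (Fin n ⊕ Fin n) ℝ)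
    (hM : M.PosDef) (hMsym : Mᵀ = M) (hM' : M'.PosDef) (hM'sym : M'ᵀ = M')
    (hle : (M' - M).PosSemidef)
    (S S' : Matrix (Fin n ⊕ Fin n) (Fin n ⊕ Fin n) ℝ)
    (hS : IsSymplectic S) (hS' : IsSymplectic S')
    (d d' : Fin n → ℝ)
    (hd : ∀ j, 0 < d j) (hd' : ∀ j, 0 < d' j)
    (hdec : Antitone d) (hdec' : Antitone d')
    (hW : M = Sᵀ * Matrix.fromBlocks (Matrix.diagonal d) 0 0 (Matrix.diagonal d) * S)
    (hW' : M' = S'ᵀ * Matrix.fromBlocks (Matrix.diagonal d') 0 0 (Matrix.diagonal d') * S') :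
    ∀ j, d j ≤ d' j := by
  classical
  intro j
  -- the test vectors
  let u : Fin n → (Fin n ⊕ Fin n) → ℂ := fun k => QB8.xv S' (-Complex.I) k
  let xx : Fin n → (Fin n ⊕ Fin n) → ℂ := fun k => QB8.xv S (-Complex.I) k
  let yy : Fin n → (Fin n ⊕ Fin n) → ℂ := fun k => QB8.xv S Complex.I k
  let Hc : Matrix (Fin n ⊕ Fin n) (Fin n ⊕ Fin n) ℂ := Complex.I • QB8.cm (stdJ n)
  have hmm : (-Complex.I) * (-Complex.I) = -1 := by ring_nf; simp [Complex.I_sq]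
  have hpp : (Complex.I) * (Complex.I) = -1 := Complex.I_mul_I
  have cA : (1 : ℂ) + star (-Complex.I) * (-Complex.I) = 2 := by
    simp [Complex.star_def]; norm_num
  have cB : (1 : ℂ) + star Complex.I * Complex.I = 2 := by
    simp [Complex.star_def]; norm_num
  have cC : (1 : ℂ) + star (-Complex.I) * Complex.I = 0 := by simp [Complex.star_def]
  have cD : (1 : ℂ) + star Complex.I * (-Complex.I) = 0 := by simp [Complex.star_def]
  have cE : Complex.I * (-Complex.I) * ((1:ℂ) + star (-Complex.I) * (-Complex.I))
      = ((2:ℝ) : ℂ) := by simp [Complex.star_def]; norm_num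
  have cF : Complex.I * Complex.I * ((1:ℂ) + star Complex.I * Complex.I)
      = ((-2:ℝ) : ℂ) := by simp [Complex.star_def]; norm_num
  have hDm : Matrix.fromBlocks (Matrix.diagonal d) 0 0 (Matrix.diagonal d) = QB8.Dm d := rfl
  have hDm' : Matrix.fromBlocks (Matrix.diagonal d') 0 0 (Matrix.diagonal d') = QB8.Dm d' := rfl
  -- pairing identities
  have hu_M' : ∀ k l, star (u k) ⬝ᵥ (QB8.cm M' *ᵥ u l)
      = if k = l then ((2 * d' k : ℝ) : ℂ) else 0 := by
    intro k l
    rw [hW', hDm', QB8.pairM hS' d' (-Complex.I) (-Complex.I) k l]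
    split_ifs with h
    · rw [cA]; push_cast; ring
    · rfl
  have hu_H : ∀ k l, star (u k) ⬝ᵥ (Hc *ᵥ u l)
      = if k = l then ((2 : ℝ) : ℂ) else 0 := by
    intro k l
    rw [show Hc = Complex.I • QB8.cm (stdJ n) from rfl,
      QB8.pairH hS' (-Complex.I) (-Complex.I) hmm k l]
    split_ifs with h
    · exact cE
    · rfl
  have hxy_M : ∀ i i' : Fin n ⊕ Fin n,
      star (Sum.elim xx yy i) ⬝ᵥ (QB8.cm M *ᵥ Sum.elim xx yy i')
        = if i = i' then ((Sum.elim (fun k => 2 * d k) (fun k => 2 * d k) i : ℝ) : ℂ) else 0 := by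
    intro i i'
    rcases i with k | k <;> rcases i' with l | l <;>
      simp only [Sum.elim_inl, Sum.elim_inr, Sum.inl.injEq, Sum.inr.injEq, reduceCtorEq,
        if_false] <;> rw [hW, hDm]
    · rw [QB8.pairM hS d (-Complex.I) (-Complex.I) k l]
      split_ifs with h
      · rw [cA]; push_cast; ring
      · rfl
    · rw [QB8.pairM hS d (-Complex.I) Complex.I k l]
      split_ifs with h <;> [rw [cC, zero_mul]; rfl]
    · rw [QB8.pairM hS d Complex.I (-Complex.I) k l]
      split_ifs with h <;> [rw [cD, zero_mul]; rfl]
    · rw [QB8.pairM hS d Complex.I Complex.I k l]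
      split_ifs with h
      · rw [cB]; push_cast; ring
      · rfl
  have hxy_H : ∀ i i' : Fin n ⊕ Fin n,
      star (Sum.elim xx yy i) ⬝ᵥ (Hc *ᵥ Sum.elim xx yy i')
        = if i = i' then ((Sum.elim (fun _ => (2:ℝ)) (fun _ => (-2:ℝ)) i : ℝ) : ℂ) else 0 := by
    intro i i'
    rcases i with k | k <;> rcases i' with l | l <;>
      simp only [Sum.elim_inl, Sum.elim_inr, Sum.inl.injEq, Sum.inr.injEq, reduceCtorEq,
        if_false] <;> rw [show Hc = Complex.I • QB8.cm (stdJ n) from rfl]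
    · rw [QB8.pairH hS (-Complex.I) (-Complex.I) hmm k l]
      split_ifs with h
      · exact cE
      · rfl
    · rw [QB8.pairH hS (-Complex.I) Complex.I hpp k l]
      split_ifs with h <;> [rw [cC, mul_zero]; rfl]
    · rw [QB8.pairH hS Complex.I (-Complex.I) hmm k l]
      split_ifs with h <;> [rw [cD, mul_zero]; rfl]
    · rw [QB8.pairH hS Complex.I Complex.I hpp k l]
      split_ifs with h
      · exact cF
      · rfl
  -- the family of 2n+1 vectors
  let F : Option (Fin n ⊕ Fin n) → ((Fin n ⊕ Fin n) → ℂ) := fun i =>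
    match i with
    | none => u j
    | some (Sum.inl k) => if k ≤ j then xx k else u k
    | some (Sum.inr k) => yy k
  have hdep : ¬ LinearIndependent ℂ F := by
    intro h
    have h1 := h.fintype_card_le_finrank
    have h2 : Module.finrank ℂ ((Fin n ⊕ Fin n) → ℂ) = 2 * n := by
      simp [Module.finrank_pi]; ring
    rw [h2] at h1
    simp only [Fintype.card_option, Fintype.card_sum, Fintype.card_fin] at h1
    omega
  obtain ⟨g, hg0, i₀, hgi₀⟩ := Fintype.not_linearIndependent_iff.mp hdep
  let a : Fin n → ℂ := fun k => if k ≤ j then g (some (Sum.inl k)) else 0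
  let b : Fin n → ℂ := fun k => g (some (Sum.inr k))
  let e : Fin n → ℂ := fun k =>
    (if k = j then g none else 0) + (if k ≤ j then 0 else g (some (Sum.inl k)))
  have expand : (∑ i, g i • F i)
      = (∑ k, e k • u k) + ((∑ k, a k • xx k) + (∑ k, b k • yy k)) := by
    rw [Fintype.sum_option, Fintype.sum_sum_type]
    have e1 : ∀ k, g (some (Sum.inl k)) • F (some (Sum.inl k))
        = a k • xx k + (if k ≤ j then 0 else g (some (Sum.inl k))) • u k := by
      intro k
      by_cases hk : k ≤ j <;> simp [F, a, hk]
    have e2 : g none • F none = ∑ k, (if k = j then g none else 0) • u k := by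
      rw [Finset.sum_eq_single j (fun k _ hk => by simp [hk]) (by simp)]
      simp [F]
    have e3 : (∑ k, e k • u k) = (∑ k, (if k = j then g none else 0) • u k)
        + ∑ k, (if k ≤ j then 0 else g (some (Sum.inl k))) • u k := by
      rw [← Finset.sum_add_distrib]
      exact Finset.sum_congr rfl (fun k _ => by rw [← add_smul])
    rw [e2, Finset.sum_congr rfl (fun k _ => e1 k), Finset.sum_add_distrib, e3]
    abel
  rw [expand] at hg0
  by_cases hE : ∀ k, e k = 0
  · -- degenerate case: all coefficients must vanish, contradiction
    have hX0 : (∑ k, e k • u k) = 0 :=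
      Finset.sum_eq_zero (fun k _ => by rw [hE k, zero_smul])
    rw [hX0, zero_add] at hg0
    have happ : (∑ k, a k • QB8.wv n (-Complex.I) k) + (∑ k, b k • QB8.wv n Complex.I k)
        = 0 := by
      have h1 := congrArg (fun v => QB8.cm S *ᵥ v) hg0
      simp only [Matrix.mulVec_add, Matrix.mulVec_zero] at h1
      rwa [QB8.S_mulVec_sum hS a (-Complex.I), QB8.S_mulVec_sum hS b Complex.I] at h1
    have hab : ∀ i, a i = 0 ∧ b i = 0 := by
      intro i
      have hinl := congrFun happ (Sum.inl i)
      have hinr := congrFun happ (Sum.inr i)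
      simp only [Pi.add_apply, Finset.sum_apply, Pi.smul_apply, smul_eq_mul, QB8.wv,
        Pi.zero_apply] at hinl hinr
      rw [Finset.sum_eq_single i (fun k _ hk => by simp [Ne.symm hk]) (by simp),
        Finset.sum_eq_single i (fun k _ hk => by simp [Ne.symm hk]) (by simp)] at hinl
      rw [Finset.sum_eq_single i (fun k _ hk => by simp [Ne.symm hk]) (by simp),
        Finset.sum_eq_single i (fun k _ hk => by simp [Ne.symm hk]) (by simp)] at hinr
      simp only [if_true, mul_one] at hinl hinr
      have h2 : Complex.I * (b i - a i) = 0 := by linear_combination hinr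
      have h3 : b i = a i := by
        rcases mul_eq_zero.mp h2 with h | h
        · exact absurd h Complex.I_ne_zero
        · exact sub_eq_zero.mp h
      rw [h3] at hinl
      have ha : a i = 0 := by linear_combination hinl / 2
      exact ⟨ha, h3.trans ha⟩
    rcases i₀ with _ | (k | k)
    · have := hE j
      simp only [e, if_pos rfl, le_refl, if_true, add_zero] at this
      exact (hgi₀ this).elim
    · by_cases hk : k ≤ j
      · have := (hab k).1
        simp only [a, hk, if_true] at this
        exact (hgi₀ this).elim
      · have := hE k
        have hkj : k ≠ j := fun h => hk (h ▸ le_refl j)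
        simp only [e, hkj, if_false, hk, zero_add] at this
        exact (hgi₀ this).elim
    · exact (hgi₀ (hab k).2).elim
  · push_neg at hE
    obtain ⟨k₀, hk₀⟩ := hE
    set X : (Fin n ⊕ Fin n) → ℂ := ∑ k, e k • u k with hXdef
    have hXxy : X = ∑ i : Fin n ⊕ Fin n,
        (Sum.elim (fun k => -a k) (fun k => -b k) i) • (Sum.elim xx yy i) := by
      have hXeq : X = -((∑ k, a k • xx k) + (∑ k, b k • yy k)) :=
        eq_neg_of_add_eq_zero_left hg0
      rw [Fintype.sum_sum_type]
      simp only [Sum.elim_inl, Sum.elim_inr, neg_smul]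
      rw [hXeq, neg_add]
      congr 1 <;> rw [← Finset.sum_neg_distrib]
    have hQ' : star X ⬝ᵥ (QB8.cm M' *ᵥ X)
        = ((∑ k, Complex.normSq (e k) * (2 * d' k) : ℝ) : ℂ) :=
      QB8.quad_eval _ u e _ hu_M'
    have hH1 : star X ⬝ᵥ (Hc *ᵥ X) = ((∑ k, Complex.normSq (e k) * 2 : ℝ) : ℂ) :=
      QB8.quad_eval _ u e _ hu_H
    have hQ : star X ⬝ᵥ (QB8.cm M *ᵥ X)
        = ((∑ i : Fin n ⊕ Fin n, Complex.normSq (Sum.elim (fun k => -a k) (fun k => -b k) i)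
            * (Sum.elim (fun k => 2 * d k) (fun k => 2 * d k) i) : ℝ) : ℂ) := by
      rw [hXxy]
      exact QB8.quad_eval _ _ _ _ hxy_M
    have hH2 : star X ⬝ᵥ (Hc *ᵥ X)
        = ((∑ i : Fin n ⊕ Fin n, Complex.normSq (Sum.elim (fun k => -a k) (fun k => -b k) i)
            * (Sum.elim (fun _ => (2:ℝ)) (fun _ => (-2:ℝ)) i) : ℝ) : ℂ) := by
      rw [hXxy]
      exact QB8.quad_eval _ _ _ _ hxy_H
    -- translate to real sums
    have hsplitM : (∑ i : Fin n ⊕ Fin n, Complex.normSq (Sum.elim (fun k => -a k)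
          (fun k => -b k) i) * (Sum.elim (fun k => 2 * d k) (fun k => 2 * d k) i))
        = (∑ k, Complex.normSq (a k) * (2 * d k)) + (∑ k, Complex.normSq (b k) * (2 * d k)) := by
      rw [Fintype.sum_sum_type]
      simp [Complex.normSq_neg]
    have hsplitH : (∑ i : Fin n ⊕ Fin n, Complex.normSq (Sum.elim (fun k => -a k)
          (fun k => -b k) i) * (Sum.elim (fun _ => (2:ℝ)) (fun _ => (-2:ℝ)) i))
        = (∑ k, Complex.normSq (a k) * 2) - (∑ k, Complex.normSq (b k) * 2) := by
      rw [Fintype.sum_sum_type]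
      simp only [Sum.elim_inl, Sum.elim_inr, Complex.normSq_neg, mul_neg]
      rw [Finset.sum_neg_distrib]
      ring
    have hEqH : (∑ k, Complex.normSq (e k) * 2)
        = (∑ k, Complex.normSq (a k) * 2) - (∑ k, Complex.normSq (b k) * 2) := by
      have := hH1.symm.trans hH2
      rw [hsplitH] at this
      exact_mod_cast this
    have hPSD : (0:ℂ) ≤ star X ⬝ᵥ (QB8.cm (M' - M) *ᵥ X) := (QB8.cm_posSemidef hle).dotProduct_mulVec_nonneg X
    have hQle : ((∑ k, Complex.normSq (a k) * (2 * d k))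
          + (∑ k, Complex.normSq (b k) * (2 * d k)))
        ≤ (∑ k, Complex.normSq (e k) * (2 * d' k)) := by
      rw [QB8.cm_sub, Matrix.sub_mulVec, dotProduct_sub, hQ', hQ, hsplitM,
        ← Complex.ofReal_sub] at hPSD
      have := Complex.zero_le_real.mp hPSD
      linarith
    have hI1 : (∑ k, Complex.normSq (e k) * (2 * d' k))
        ≤ d' j * (∑ k, Complex.normSq (e k) * 2) := by
      rw [Finset.mul_sum]
      refine Finset.sum_le_sum (fun k _ => ?_)
      rcases eq_or_ne (e k) 0 with h0 | h0
      · simp [h0]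
      · have hjk : j ≤ k := by
          by_contra hlt
          push_neg at hlt
          exact h0 (by simp [e, ne_of_lt hlt, le_of_lt hlt])
        have hdk := hdec' hjk
        nlinarith [Complex.normSq_nonneg (e k)]
    have hI2 : d j * (∑ k, Complex.normSq (a k) * 2) ≤ ∑ k, Complex.normSq (a k) * (2 * d k) := by
      rw [Finset.mul_sum]
      refine Finset.sum_le_sum (fun k _ => ?_)
      rcases eq_or_ne (a k) 0 with h0 | h0
      · simp [h0]
      · have hkj : k ≤ j := by
          by_contra hh
          exact h0 (by simp [a, hh])
        have hdk := hdec hkj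
        nlinarith [Complex.normSq_nonneg (a k)]
    have hI3 : (0:ℝ) ≤ ∑ k, Complex.normSq (b k) * (2 * d k) :=
      Finset.sum_nonneg (fun k _ => mul_nonneg (Complex.normSq_nonneg _)
        (by nlinarith [hd k]))
    have hI4 : (0:ℝ) ≤ ∑ k, Complex.normSq (b k) * 2 :=
      Finset.sum_nonneg (fun k _ => mul_nonneg (Complex.normSq_nonneg _) (by norm_num))
    have hpos : 0 < ∑ k, Complex.normSq (e k) * 2 := by
      refine Finset.sum_pos' (fun k _ => mul_nonneg (Complex.normSq_nonneg _) (by norm_num))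
        ⟨k₀, Finset.mem_univ _, ?_⟩
      have := Complex.normSq_pos.mpr hk₀
      nlinarith
    have hchain : d j * (∑ k, Complex.normSq (e k) * 2)
        ≤ d' j * (∑ k, Complex.normSq (e k) * 2) := by
      have hdj := hd j
      nlinarith [hEqH, hQle, hI1, hI2, hI3, hI4]
    exact le_of_mul_le_mul_right (by linarith [hchain]) hpos
end

section
/- There exists a symplectic matrix S sending the ellipsoid B = {z : z^T M z ≤ 1} into the ellipsoid B' = {z : z^T M' z ≤ 1} if and only if Spec_ω(M) ≥ Spec_ω(M') termwise (symplectic spectra in decreasing order). -/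
open Matrix

namespace QB
set_option linter.unusedSectionVars false
variable {n : ℕ} {ι : Type*} [Fintype ι] [DecidableEq ι]

lemma stdJ_mul_stdJ (n : ℕ) : stdJ n * stdJ n = -1 := by
  simp [stdJ, Matrix.fromBlocks_multiply, ← Matrix.fromBlocks_one, Matrix.fromBlocks_neg]

lemma stdJ_transpose (n : ℕ) : (stdJ n)ᵀ = -(stdJ n) := by
  simp [stdJ, Matrix.fromBlocks_transpose, Matrix.fromBlocks_neg]

/-- Explicit inverse of a symplectic matrix. -/
noncomputable def sinv (S : Matrix (Fin n ⊕ Fin n) (Fin n ⊕ Fin n) ℝ) :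
    Matrix (Fin n ⊕ Fin n) (Fin n ⊕ Fin n) ℝ :=
  -(stdJ n * Sᵀ * stdJ n)

lemma sinv_mul {S : Matrix (Fin n ⊕ Fin n) (Fin n ⊕ Fin n) ℝ} (hS : IsSymplectic S) :
    sinv S * S = 1 := by
  have h : stdJ n * (Sᵀ * stdJ n * S) = -1 := by rw [hS, stdJ_mul_stdJ]
  calc sinv S * S = -(stdJ n * (Sᵀ * stdJ n * S)) := by simp [sinv, Matrix.mul_assoc]
  _ = 1 := by rw [h, neg_neg]

lemma mul_sinv {S : Matrix (Fin n ⊕ Fin n) (Fin n ⊕ Fin n) ℝ} (hS : IsSymplectic S) :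
    S * sinv S = 1 := mul_eq_one_comm.mpr (sinv_mul hS)

lemma symp_JT {S : Matrix (Fin n ⊕ Fin n) (Fin n ⊕ Fin n) ℝ} (hS : IsSymplectic S) :
    S * stdJ n * Sᵀ = stdJ n := by
  have h : S * (stdJ n * Sᵀ * stdJ n) = -1 := by
    have := mul_sinv hS
    rw [sinv, Matrix.mul_neg, neg_eq_iff_eq_neg] at this
    rw [this]
  calc S * stdJ n * Sᵀ
      = -(S * (stdJ n * Sᵀ * stdJ n) * stdJ n) := by
        simp [Matrix.mul_assoc, stdJ_mul_stdJ]
  _ = stdJ n := by rw [h]; simp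

lemma symp_mul {S T : Matrix (Fin n ⊕ Fin n) (Fin n ⊕ Fin n) ℝ}
    (hS : IsSymplectic S) (hT : IsSymplectic T) : IsSymplectic (S * T) := by
  unfold IsSymplectic at *
  rw [Matrix.transpose_mul]
  calc Tᵀ * Sᵀ * stdJ n * (S * T) = Tᵀ * (Sᵀ * stdJ n * S) * T := by
        simp [Matrix.mul_assoc]
  _ = stdJ n := by rw [hS, hT]

lemma symp_sinv {S : Matrix (Fin n ⊕ Fin n) (Fin n ⊕ Fin n) ℝ}
    (hS : IsSymplectic S) : IsSymplectic (sinv S) := by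
  unfold IsSymplectic
  conv_lhs => rw [← hS]
  calc (sinv S)ᵀ * (Sᵀ * stdJ n * S) * sinv S
      = (S * sinv S)ᵀ * stdJ n * (S * sinv S) := by
        simp [Matrix.transpose_mul, Matrix.mul_assoc]
  _ = stdJ n := by rw [mul_sinv hS]; simp

/-- Weighted sum of squares. -/
noncomputable def Q (g : ι → ℝ) (v : ι → ℝ) : ℝ := ∑ i, g i * v i ^ 2

lemma Q_nonneg {g : ι → ℝ} (hg : ∀ i, 0 < g i) (v : ι → ℝ) : 0 ≤ Q g v :=
  Finset.sum_nonneg fun i _ => mul_nonneg (hg i).le (sq_nonneg _)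

lemma dot_diagonal_eq_Q (g v : ι → ℝ) : v ⬝ᵥ (Matrix.diagonal g) *ᵥ v = Q g v := by
  simp [dotProduct, Matrix.mulVec_diagonal, Q]; congr 1; funext i; ring

lemma dot_transpose_mulVec (A : Matrix ι ι ℝ) (x y : ι → ℝ) :
    x ⬝ᵥ (Aᵀ *ᵥ y) = (A *ᵥ x) ⬝ᵥ y := by
  rw [Matrix.dotProduct_mulVec, Matrix.vecMul_transpose]

lemma dot_congruence (A B : Matrix ι ι ℝ) (x : ι → ℝ) :
    x ⬝ᵥ (Aᵀ * B * A) *ᵥ x = (A *ᵥ x) ⬝ᵥ B *ᵥ (A *ᵥ x) := by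
  rw [← Matrix.mulVec_mulVec, ← Matrix.mulVec_mulVec, dot_transpose_mulVec]

/-- Weighted Cauchy-Schwarz. -/
lemma weighted_cs (c x y : ι → ℝ) (hc : ∀ i, 0 < c i) :
    (∑ i, x i * y i) ^ 2 ≤ (∑ i, c i * x i ^ 2) * (∑ i, (c i)⁻¹ * y i ^ 2) := by
  have h := Finset.sum_mul_sq_le_sq_mul_sq Finset.univ
    (fun i => Real.sqrt (c i) * x i) (fun i => (Real.sqrt (c i))⁻¹ * y i)
  have e1 : ∀ i : ι, Real.sqrt (c i) * x i * ((Real.sqrt (c i))⁻¹ * y i) = x i * y i := by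
    intro i
    have : Real.sqrt (c i) ≠ 0 := Real.sqrt_ne_zero'.mpr (hc i)
    field_simp
  have e2 : ∀ i : ι, (Real.sqrt (c i) * x i) ^ 2 = c i * x i ^ 2 := by
    intro i; rw [mul_pow, Real.sq_sqrt (hc i).le]
  have e3 : ∀ i : ι, ((Real.sqrt (c i))⁻¹ * y i) ^ 2 = (c i)⁻¹ * y i ^ 2 := by
    intro i; rw [mul_pow, inv_pow, Real.sq_sqrt (hc i).le]
  calc (∑ i, x i * y i) ^ 2
      = (∑ i, Real.sqrt (c i) * x i * ((Real.sqrt (c i))⁻¹ * y i)) ^ 2 := by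
        congr 1; exact Finset.sum_congr rfl fun i _ => (e1 i).symm
  _ ≤ (∑ i, (Real.sqrt (c i) * x i) ^ 2) * (∑ i, ((Real.sqrt (c i))⁻¹ * y i) ^ 2) := h
  _ = _ := by
        congr 1
        · exact Finset.sum_congr rfl fun i _ => e2 i
        · exact Finset.sum_congr rfl fun i _ => e3 i

/-- Homogenization of the unit-ball inclusion. -/
lemma form_le {M M' S : Matrix ι ι ℝ} (hM : M.PosDef)
    (h : ∀ z, z ⬝ᵥ M *ᵥ z ≤ 1 → (S *ᵥ z) ⬝ᵥ M' *ᵥ (S *ᵥ z) ≤ 1) :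
    ∀ v, (S *ᵥ v) ⬝ᵥ M' *ᵥ (S *ᵥ v) ≤ v ⬝ᵥ M *ᵥ v := by
  intro v
  rcases eq_or_ne v 0 with rfl | hv
  · simpa using h 0 (by simp)
  · have hc : 0 < v ⬝ᵥ M *ᵥ v := by simpa using hM.dotProduct_mulVec_pos hv
    set c := v ⬝ᵥ M *ᵥ v with hcdef
    set a := (Real.sqrt c)⁻¹ with hadef
    have ha2 : a ^ 2 * c = 1 := by
      rw [hadef, inv_pow, Real.sq_sqrt hc.le]
      field_simp
    have hsc : ∀ (N : Matrix ι ι ℝ) (w : ι → ℝ),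
        (a • w) ⬝ᵥ N *ᵥ (a • w) = a ^ 2 * (w ⬝ᵥ N *ᵥ w) := by
      intro N w
      rw [Matrix.mulVec_smul, smul_dotProduct, dotProduct_smul]
      simp only [smul_eq_mul]; ring
    have h1 : (a • v) ⬝ᵥ M *ᵥ (a • v) ≤ 1 := by rw [hsc, ← hcdef, ha2]
    have h2 := h (a • v) h1
    rw [Matrix.mulVec_smul, hsc] at h2
    calc (S *ᵥ v) ⬝ᵥ M' *ᵥ (S *ᵥ v) = (a ^ 2 * ((S *ᵥ v) ⬝ᵥ M' *ᵥ (S *ᵥ v))) * c := by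
          rw [mul_comm (a ^ 2), mul_assoc, ha2]; ring
    _ ≤ 1 * c := mul_le_mul_of_nonneg_right h2 hc.le
    _ = c := one_mul c

/-- Inverse-antitonicity via Cauchy–Schwarz. -/
lemma inv_antitone {g g' : ι → ℝ} (hg : ∀ i, 0 < g i) (hg' : ∀ i, 0 < g' i)
    {R : Matrix ι ι ℝ} (hR : ∀ v, Q g' (R *ᵥ v) ≤ Q g v) (w : ι → ℝ) :
    Q (fun i => (g i)⁻¹) (Rᵀ *ᵥ w) ≤ Q (fun i => (g' i)⁻¹) w := by
  set u := Rᵀ *ᵥ w with hu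
  set v : ι → ℝ := fun i => (g i)⁻¹ * u i with hv
  set A := Q (fun i => (g i)⁻¹) u with hA
  set B := Q (fun i => (g' i)⁻¹) w with hB
  have hQgv : Q g v = A := by
    rw [hA, Q, Q]
    refine Finset.sum_congr rfl fun i _ => ?_
    rw [hv]
    have := (hg i).ne'
    field_simp
  have hkey : ∑ i, w i * (R *ᵥ v) i = A := by
    have h1 : ∑ i, w i * (R *ᵥ v) i = w ⬝ᵥ (R *ᵥ v) := rfl
    have h2 : w ⬝ᵥ (R *ᵥ v) = (Rᵀ *ᵥ w) ⬝ᵥ v := by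
      rw [← dot_transpose_mulVec Rᵀ, Matrix.transpose_transpose]
    rw [h1, h2, ← hu, hA, Q, dotProduct]
    refine Finset.sum_congr rfl fun i _ => ?_
    rw [hv]; ring
  have hBnn : 0 ≤ B := Q_nonneg (fun i => inv_pos.mpr (hg' i)) w
  have hAnn : 0 ≤ A := Q_nonneg (fun i => inv_pos.mpr (hg i)) u
  have hcs : A ^ 2 ≤ B * Q g' (R *ᵥ v) := by
    calc A ^ 2 = (∑ i, w i * (R *ᵥ v) i) ^ 2 := by rw [hkey]
    _ ≤ (∑ i, (g' i)⁻¹ * w i ^ 2) * (∑ i, ((g' i)⁻¹)⁻¹ * (R *ᵥ v) i ^ 2) :=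
        weighted_cs _ _ _ fun i => inv_pos.mpr (hg' i)
    _ = B * Q g' (R *ᵥ v) := by
        rw [hB, Q, Q]
        congr 1
        exact Finset.sum_congr rfl fun i _ => by rw [inv_inv]
  have hfin : A ^ 2 ≤ B * A := le_trans hcs (by
    have := hR v
    rw [hQgv] at this
    exact mul_le_mul_of_nonneg_left this hBnn)
  rcases eq_or_lt_of_le hAnn with h0 | hpos
  · rw [hA] at h0 ⊢; rw [← h0]; exact hBnn
  · nlinarith

lemma fromBlocks_diagonal_eq (c : Fin n → ℝ) :
    Matrix.fromBlocks (Matrix.diagonal c) 0 0 (Matrix.diagonal c)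
      = Matrix.diagonal (Sum.elim c c) := by
  ext p q
  cases p <;> cases q <;>
    simp [Matrix.diagonal_apply, Matrix.fromBlocks]

lemma stdJ_mulVec (v : Fin n ⊕ Fin n → ℝ) :
    (stdJ n) *ᵥ v = Sum.elim (fun i => v (Sum.inr i)) (fun i => -(v (Sum.inl i))) := by
  funext p
  cases p with
  | inl i =>
      simp [stdJ, Matrix.mulVec, dotProduct, Fintype.sum_sum_type, Matrix.fromBlocks,
        Matrix.one_apply]
  | inr i =>
      simp [stdJ, Matrix.mulVec, dotProduct, Fintype.sum_sum_type, Matrix.fromBlocks,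
        Matrix.one_apply]

lemma Q_sum_type (c : Fin n → ℝ) (v : Fin n ⊕ Fin n → ℝ) :
    Q (Sum.elim c c) v = ∑ i, c i * (v (Sum.inl i) ^ 2 + v (Sum.inr i) ^ 2) := by
  rw [Q, Fintype.sum_sum_type, ← Finset.sum_add_distrib]
  exact Finset.sum_congr rfl fun i _ => by simp; ring

lemma Q_stdJ_invariant (c : Fin n → ℝ) (v : Fin n ⊕ Fin n → ℝ) :
    Q (Sum.elim c c) ((stdJ n) *ᵥ v) = Q (Sum.elim c c) v := by
  rw [stdJ_mulVec, Q_sum_type, Q_sum_type]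
  exact Finset.sum_congr rfl fun i _ => by
    simp only [Sum.elim_inl, Sum.elim_inr]; ring

lemma elim_inv (c : Fin n → ℝ) :
    (fun p => (Sum.elim c c p)⁻¹) = Sum.elim (fun i => (c i)⁻¹) (fun i => (c i)⁻¹) := by
  funext p; cases p <;> simp

lemma finrank_ker_funLeft {κ : Type*} [Fintype κ] (f : κ → ι) (hf : Function.Injective f) :
    Module.finrank ℝ (LinearMap.ker (LinearMap.funLeft ℝ ℝ f)) + Fintype.card κ
      = Fintype.card ι := by
  have hsurj := LinearMap.funLeft_surjective_of_injective ℝ ℝ f hf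
  have h1 := (LinearMap.funLeft ℝ ℝ f).finrank_range_add_finrank_ker
  rw [LinearMap.range_eq_top.mpr hsurj, finrank_top] at h1
  rw [Module.finrank_fintype_fun_eq_card, Module.finrank_fintype_fun_eq_card] at h1
  omega

lemma mem_ker_funLeft {κ : Type*} [Fintype κ] (f : κ → ι) (u : ι → ℝ) :
    u ∈ LinearMap.ker (LinearMap.funLeft ℝ ℝ f) ↔ ∀ p, u (f p) = 0 := by
  rw [LinearMap.mem_ker, funext_iff]
  simp [LinearMap.funLeft_apply]

lemma exists_mem_ne_zero {V W : Submodule ℝ (ι → ℝ)}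
    (h : Fintype.card ι < Module.finrank ℝ V + Module.finrank ℝ W) :
    ∃ u, u ∈ V ∧ u ∈ W ∧ u ≠ 0 := by
  by_contra hc
  push_neg at hc
  have hd : Disjoint V W := by
    rw [Submodule.disjoint_def]
    exact hc
  have := Submodule.finrank_add_finrank_le_of_disjoint hd
  rw [Module.finrank_fintype_fun_eq_card] at this
  omega

lemma finrank_map_mulVecLin {R Rinv : Matrix ι ι ℝ} (hinv : Rinv * R = 1)
    (W : Submodule ℝ (ι → ℝ)) :
    Module.finrank ℝ (W.map (Matrix.mulVecLin R)) = Module.finrank ℝ W := by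
  have hinj : Function.Injective (Matrix.mulVecLin R) := by
    intro a b hab
    have : Rinv *ᵥ (R *ᵥ a) = Rinv *ᵥ (R *ᵥ b) := by
      simpa [Matrix.mulVecLin_apply] using congrArg (fun x => Rinv *ᵥ x) hab
    simpa [Matrix.mulVec_mulVec, hinv] using this
  exact (LinearEquiv.finrank_eq (Submodule.equivMapOfInjective _ hinj W)).symm

end QB

open QB

set_option maxHeartbeats 2000000 in
/-- there is a symplectic matrix sending the ellipsoid
`{z : zᵀ M z ≤ 1}` into `{z : zᵀ M' z ≤ 1}` if and only if the symplectic
spectra (in decreasing order, exhibited through Williamson diagonalizations)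
satisfy `Spec_ω(M) ≥ Spec_ω(M')` termwise. -/
theorem quantum_blobs_stmt10 {n : ℕ}
    (M M' : Matrix (Fin n ⊕ Fin n) (Fin n ⊕ Fin n) ℝ)
    (hM : M.PosDef) (hMsym : Mᵀ = M) (hM' : M'.PosDef) (hM'sym : M'ᵀ = M')
    (S₁ S₂ : Matrix (Fin n ⊕ Fin n) (Fin n ⊕ Fin n) ℝ)
    (hS₁ : IsSymplectic S₁) (hS₂ : IsSymplectic S₂)
    (d d' : Fin n → ℝ)
    (hd : ∀ j, 0 < d j) (hd' : ∀ j, 0 < d' j)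
    (hdec : Antitone d) (hdec' : Antitone d')
    (hW : M = S₁ᵀ * Matrix.fromBlocks (Matrix.diagonal d) 0 0 (Matrix.diagonal d) * S₁)
    (hW' : M' = S₂ᵀ * Matrix.fromBlocks (Matrix.diagonal d') 0 0 (Matrix.diagonal d') * S₂) :
    (∃ S : Matrix (Fin n ⊕ Fin n) (Fin n ⊕ Fin n) ℝ, IsSymplectic S ∧
        ∀ z : (Fin n ⊕ Fin n) → ℝ, z ⬝ᵥ M.mulVec z ≤ 1 →
          (S.mulVec z) ⬝ᵥ M'.mulVec (S.mulVec z) ≤ 1) ↔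
      (∀ j, d' j ≤ d j) := by
  rw [fromBlocks_diagonal_eq] at hW
  rw [fromBlocks_diagonal_eq] at hW'
  constructor
  · -- hard direction
    rintro ⟨S, hS, hball⟩ j
    by_contra hlt
    push_neg at hlt
    set k := (j : ℕ) with hk
    have hkn : k < n := j.isLt
    set R := S₂ * S * sinv S₁ with hRdef
    have hRsymp : IsSymplectic R := symp_mul (symp_mul hS₂ hS) (symp_sinv hS₁)
    have hRJ : R * stdJ n * Rᵀ = stdJ n := symp_JT hRsymp
    have hRTinv : (sinv R)ᵀ * Rᵀ = 1 := by
      rw [← Matrix.transpose_mul, mul_sinv hRsymp, Matrix.transpose_one]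
    have hgpos : ∀ p, 0 < Sum.elim d d p := by rintro (i | i) <;> simpa using hd i
    have hg'pos : ∀ p, 0 < Sum.elim d' d' p := by rintro (i | i) <;> simpa using hd' i
    -- homogeneous form inequality in diagonal coordinates
    have hform := form_le hM hball
    have hQ : ∀ v, Q (Sum.elim d' d') (R *ᵥ v) ≤ Q (Sum.elim d d) v := by
      intro v
      have h := hform (sinv S₁ *ᵥ v)
      rw [hW, hW', dot_congruence, dot_congruence] at h
      have e1 : S₂ *ᵥ (S *ᵥ (sinv S₁ *ᵥ v)) = R *ᵥ v := by
        rw [Matrix.mulVec_mulVec, Matrix.mulVec_mulVec, hRdef]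
      have e2 : S₁ *ᵥ (sinv S₁ *ᵥ v) = v := by
        rw [Matrix.mulVec_mulVec, mul_sinv hS₁, Matrix.one_mulVec]
      rw [e1, e2, dot_diagonal_eq_Q, dot_diagonal_eq_Q] at h
      exact h
    -- the two coordinate subspaces
    set m := n - (k + 1) with hm
    set fL : Fin k ⊕ Fin k → Fin n ⊕ Fin n :=
      Sum.map (Fin.castLE hkn.le) (Fin.castLE hkn.le) with hfLdef
    have hfL : Function.Injective fL :=
      (Fin.castLE_injective _).sumMap (Fin.castLE_injective _)
    set gg : Fin m → Fin n := fun a => ⟨k + 1 + a.val, by have := a.isLt; omega⟩ with hggdef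
    have hgg : Function.Injective gg := by
      intro a b hab
      have : k + 1 + a.val = k + 1 + b.val := congrArg Fin.val hab
      exact Fin.ext (by omega)
    set gL : Fin m ⊕ Fin m → Fin n ⊕ Fin n := Sum.map gg gg with hgLdef
    have hgL : Function.Injective gL := hgg.sumMap hgg
    set Wsub := LinearMap.ker (LinearMap.funLeft ℝ ℝ fL) with hWsubdef
    set W0 := LinearMap.ker (LinearMap.funLeft ℝ ℝ gL) with hW0def
    set V := W0.map (Matrix.mulVecLin Rᵀ) with hVdef
    have hdW := finrank_ker_funLeft fL hfL
    have hdW0 := finrank_ker_funLeft gL hgL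
    have hdV : Module.finrank ℝ V = Module.finrank ℝ W0 := finrank_map_mulVecLin hRTinv W0
    have hdW' : Module.finrank ℝ Wsub + (k + k) = n + n := by
      simpa [Fintype.card_sum] using hdW
    have hdW0' : Module.finrank ℝ W0 + (m + m) = n + n := by
      simpa [Fintype.card_sum] using hdW0
    obtain ⟨u, huV, huW, hune⟩ := exists_mem_ne_zero (V := V) (W := Wsub) (by
      rw [hdV]
      simp only [Fintype.card_sum, Fintype.card_fin]
      omega)
    obtain ⟨w, hwW0, huw⟩ := Submodule.mem_map.mp huV
    have huw' : u = Rᵀ *ᵥ w := by rw [← huw]; rfl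
    have hwne : w ≠ 0 := by
      rintro rfl
      apply hune
      rw [huw']
      simp
    -- vanishing of coordinates
    have hwvanish : ∀ i : Fin n, k + 1 ≤ i.val →
        w (Sum.inl i) = 0 ∧ w (Sum.inr i) = 0 := by
      intro i hi
      rw [hW0def, mem_ker_funLeft] at hwW0
      have hval : i.val - (k + 1) < m := by have := i.isLt; omega
      have hggi : gg ⟨i.val - (k + 1), hval⟩ = i := Fin.ext (by
        simp only [hggdef]; omega)
      constructor
      · have := hwW0 (Sum.inl ⟨i.val - (k + 1), hval⟩)
        rwa [hgLdef, Sum.map_inl, hggi] at this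
      · have := hwW0 (Sum.inr ⟨i.val - (k + 1), hval⟩)
        rwa [hgLdef, Sum.map_inr, hggi] at this
    have huvanish : ∀ i : Fin n, i.val < k →
        u (Sum.inl i) = 0 ∧ u (Sum.inr i) = 0 := by
      intro i hi
      rw [hWsubdef, mem_ker_funLeft] at huW
      have hci : Fin.castLE hkn.le ⟨i.val, hi⟩ = i := Fin.ext rfl
      constructor
      · have := huW (Sum.inl ⟨i.val, hi⟩)
        rwa [hfLdef, Sum.map_inl, hci] at this
      · have := huW (Sum.inr ⟨i.val, hi⟩)
        rwa [hfLdef, Sum.map_inr, hci] at this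
    set t := d j ^ 2 with ht
    -- (3) transfer
    have h3 : Q (Sum.elim d' d') w ≤ Q (Sum.elim d d) u := by
      have e1 : R *ᵥ (stdJ n *ᵥ u) = stdJ n *ᵥ w := by
        rw [huw', Matrix.mulVec_mulVec, Matrix.mulVec_mulVec, hRJ]
      calc Q (Sum.elim d' d') w = Q (Sum.elim d' d') (stdJ n *ᵥ w) :=
            (Q_stdJ_invariant d' w).symm
      _ = Q (Sum.elim d' d') (R *ᵥ (stdJ n *ᵥ u)) := by rw [e1]
      _ ≤ Q (Sum.elim d d) (stdJ n *ᵥ u) := hQ _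
      _ = Q (Sum.elim d d) u := Q_stdJ_invariant d u
    -- (4) inverse antitone
    have h4 : Q (Sum.elim (fun i => (d i)⁻¹) (fun i => (d i)⁻¹)) u
        ≤ Q (Sum.elim (fun i => (d' i)⁻¹) (fun i => (d' i)⁻¹)) w := by
      have := inv_antitone hgpos hg'pos hQ w
      rw [← huw'] at this
      rwa [elim_inv, elim_inv] at this
    -- (1) u in Wsub
    have h1 : Q (Sum.elim d d) u
        ≤ t * Q (Sum.elim (fun i => (d i)⁻¹) (fun i => (d i)⁻¹)) u := by
      rw [Q_sum_type, Q_sum_type, Finset.mul_sum]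
      refine Finset.sum_le_sum fun i _ => ?_
      set s := u (Sum.inl i) ^ 2 + u (Sum.inr i) ^ 2 with hs
      rcases lt_or_ge i.val k with hik | hik
      · obtain ⟨e1, e2⟩ := huvanish i hik
        rw [hs, e1, e2]
        simp
      · have hji : j ≤ i := by rw [Fin.le_def]; omega
        have hdi : d i ≤ d j := hdec hji
        have h0 : (0 : ℝ) < d i := hd i
        have hsnn : 0 ≤ s := by positivity
        have key : d i * s ≤ d j ^ 2 * s / d i := by
          rw [le_div_iff₀ h0]
          nlinarith [mul_nonneg (mul_nonneg (sub_nonneg.mpr hdi)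
            (by linarith [hd j] : (0:ℝ) ≤ d j + d i)) hsnn]
        calc d i * s ≤ d j ^ 2 * s / d i := key
        _ = t * ((d i)⁻¹ * s) := by rw [ht]; ring
    -- (2) strict inequality from w
    have h2 : t * Q (Sum.elim (fun i => (d' i)⁻¹) (fun i => (d' i)⁻¹)) w
        < Q (Sum.elim d' d') w := by
      rw [Q_sum_type, Q_sum_type, Finset.mul_sum]
      obtain ⟨p, hp⟩ := Function.ne_iff.mp hwne
      have hexists : ∃ i₀ : Fin n, i₀.val ≤ k ∧
          0 < w (Sum.inl i₀) ^ 2 + w (Sum.inr i₀) ^ 2 := by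
        cases p with
        | inl i₀ =>
            refine ⟨i₀, ?_, ?_⟩
            · by_contra hcon
              exact hp ((hwvanish i₀ (by omega)).1)
            · have : 0 < w (Sum.inl i₀) ^ 2 := sq_pos_of_ne_zero hp
              nlinarith [sq_nonneg (w (Sum.inr i₀))]
        | inr i₀ =>
            refine ⟨i₀, ?_, ?_⟩
            · by_contra hcon
              exact hp ((hwvanish i₀ (by omega)).2)
            · have : 0 < w (Sum.inr i₀) ^ 2 := sq_pos_of_ne_zero hp
              nlinarith [sq_nonneg (w (Sum.inl i₀))]
      obtain ⟨i₀, hi₀k, hi₀pos⟩ := hexists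
      have hterm : ∀ i : Fin n,
          t * ((d' i)⁻¹ * (w (Sum.inl i) ^ 2 + w (Sum.inr i) ^ 2))
            ≤ d' i * (w (Sum.inl i) ^ 2 + w (Sum.inr i) ^ 2) := by
        intro i
        set s := w (Sum.inl i) ^ 2 + w (Sum.inr i) ^ 2 with hs
        rcases le_or_gt (k + 1) i.val with hik | hik
        · obtain ⟨e1, e2⟩ := hwvanish i hik
          rw [hs, e1, e2]
          simp
        · have hji : i ≤ j := by rw [Fin.le_def]; omega
          have hdi : d' j ≤ d' i := hdec' hji
          have h0 : (0 : ℝ) < d' i := hd' i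
          have hsnn : 0 ≤ s := by positivity
          have : t * ((d' i)⁻¹ * s) = t * s / d' i := by ring
          rw [this, div_le_iff₀ h0]
          have htlt : t < d' i ^ 2 := by
            rw [ht]
            nlinarith [hd j, hd' j]
          nlinarith
      have hstrict : t * ((d' i₀)⁻¹ * (w (Sum.inl i₀) ^ 2 + w (Sum.inr i₀) ^ 2))
          < d' i₀ * (w (Sum.inl i₀) ^ 2 + w (Sum.inr i₀) ^ 2) := by
        set s := w (Sum.inl i₀) ^ 2 + w (Sum.inr i₀) ^ 2 with hs
        have hji : i₀ ≤ j := by rw [Fin.le_def]; omega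
        have hdi : d' j ≤ d' i₀ := hdec' hji
        have h0 : (0 : ℝ) < d' i₀ := hd' i₀
        have : t * ((d' i₀)⁻¹ * s) = t * s / d' i₀ := by ring
        rw [this, div_lt_iff₀ h0]
        have htlt : t < d' i₀ ^ 2 := by
          rw [ht]
          nlinarith [hd j, hd' j]
        nlinarith
      exact Finset.sum_lt_sum (fun i _ => hterm i) ⟨i₀, Finset.mem_univ _, hstrict⟩
    -- combine
    have htpos : 0 < t := by rw [ht]; exact pow_pos (hd j) 2
    have : Q (Sum.elim d d) u < Q (Sum.elim d d) u :=
      calc Q (Sum.elim d d) u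
          ≤ t * Q (Sum.elim (fun i => (d i)⁻¹) (fun i => (d i)⁻¹)) u := h1
      _ ≤ t * Q (Sum.elim (fun i => (d' i)⁻¹) (fun i => (d' i)⁻¹)) w :=
          mul_le_mul_of_nonneg_left h4 htpos.le
      _ < Q (Sum.elim d' d') w := h2
      _ ≤ Q (Sum.elim d d) u := h3
    exact lt_irrefl _ this
  · -- easy direction
    intro hle
    refine ⟨sinv S₂ * S₁, symp_mul (symp_sinv hS₂) hS₁, fun z hz => ?_⟩
    have e1 : S₂ *ᵥ ((sinv S₂ * S₁) *ᵥ z) = S₁ *ᵥ z := by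
      rw [Matrix.mulVec_mulVec, ← Matrix.mul_assoc, mul_sinv hS₂, Matrix.one_mul]
    rw [hW', dot_congruence, e1, dot_diagonal_eq_Q]
    rw [hW, dot_congruence, dot_diagonal_eq_Q] at hz
    calc Q (Sum.elim d' d') (S₁ *ᵥ z) ≤ Q (Sum.elim d d) (S₁ *ᵥ z) := by
          rw [Q_sum_type, Q_sum_type]
          refine Finset.sum_le_sum fun i _ => ?_
          exact mul_le_mul_of_nonneg_right (hle i) (by positivity)
    _ ≤ 1 := hz
end

section
/- Linear non-squeezing: if S is a symplectic 2n×2n matrix and r, R > 0 are such that S maps the ball B^{2n}(r) = {z : |z| ≤ r} into the cylinder Z_j(R) = {z : x_j^2 + p_j^2 ≤ R^2}, then r ≤ R. -/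
open Matrix

lemma symplectic_transpose {n : ℕ} (S : Matrix (Fin n ⊕ Fin n) (Fin n ⊕ Fin n) ℝ)
    (hS : Sᵀ * stdJ n * S = stdJ n) : S * stdJ n * Sᵀ = stdJ n := by
  have hinv : ((-stdJ n) * Sᵀ * stdJ n) * S = 1 := by
    calc ((-stdJ n) * Sᵀ * stdJ n) * S = -(stdJ n * (Sᵀ * stdJ n * S)) := by noncomm_ring
    _ = -(stdJ n * stdJ n) := by rw [hS]
    _ = 1 := by rw [stdJ_sq]; simp
  have h2 : S * ((-stdJ n) * Sᵀ * stdJ n) = 1 := mul_eq_one_comm.mp hinv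
  have h4 : -(S * stdJ n * Sᵀ * (stdJ n * stdJ n)) = stdJ n := by
    calc -(S * stdJ n * Sᵀ * (stdJ n * stdJ n))
        = (S * ((-stdJ n) * Sᵀ * stdJ n)) * stdJ n := by noncomm_ring
    _ = stdJ n := by rw [h2]; simp
  rw [stdJ_sq] at h4; simpa using h4

/-- linear non-squeezing. If a symplectic matrix `S` maps the
Euclidean ball of radius `r` into the symplectic cylinder
`Z_j(R) = {z : x_j² + p_j² ≤ R²}`, then `r ≤ R`. -/
theorem quantum_blobs_stmt11 {n : ℕ}
    (S : Matrix (Fin n ⊕ Fin n) (Fin n ⊕ Fin n) ℝ) (hS : IsSymplectic S)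
    (r R : ℝ) (hr : 0 < r) (hR : 0 < R) (j : Fin n)
    (hmap : ∀ z : (Fin n ⊕ Fin n) → ℝ, (∑ i, (z i) ^ 2) ≤ r ^ 2 →
      (S.mulVec z (Sum.inl j)) ^ 2 + (S.mulVec z (Sum.inr j)) ^ 2 ≤ R ^ 2) :
    r ≤ R := by
  set a : (Fin n ⊕ Fin n) → ℝ := fun k => S (Sum.inl j) k with ha
  set b : (Fin n ⊕ Fin n) → ℝ := fun k => S (Sum.inr j) k with hb
  set c : (Fin n ⊕ Fin n) → ℝ :=
    Sum.elim (fun i => b (Sum.inr i)) (fun i => -b (Sum.inl i)) with hc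
  have hJ := symplectic_transpose S hS
  -- the key symplectic identity: a · c = 1
  have hac : ∑ k, a k * c k = 1 := by
    have h1 : (S * stdJ n * Sᵀ) (Sum.inl j) (Sum.inr j) = ∑ k, a k * c k := by
      rw [Matrix.mul_assoc]
      simp [ha, hb, hc, Matrix.mul_apply, stdJ, Matrix.fromBlocks, Fintype.sum_sum_type,
        Matrix.one_apply, Finset.mul_sum, mul_ite]
    rw [hJ] at h1
    rw [← h1]
    simp [stdJ, Matrix.fromBlocks, Matrix.one_apply]
  set A : ℝ := ∑ k, a k ^ 2 with hA
  set B : ℝ := ∑ k, b k ^ 2 with hB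
  have hcsum : ∑ k, c k ^ 2 = B := by
    rw [hB, hc]
    rw [Fintype.sum_sum_type, Fintype.sum_sum_type]
    simp [add_comm]
  have hA0 : 0 ≤ A := Finset.sum_nonneg fun k _ => sq_nonneg _
  have hB0 : 0 ≤ B := Finset.sum_nonneg fun k _ => sq_nonneg _
  -- Cauchy–Schwarz : 1 ≤ A * B
  have hAB : 1 ≤ A * B := by
    have hcs := Finset.sum_mul_sq_le_sq_mul_sq Finset.univ a c
    rw [hac, hcsum, one_pow, ← hA] at hcs
    exact hcs
  have hApos : 0 < A := by nlinarith
  have hBpos : 0 < B := by nlinarith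
  -- test vector in a direction v whose image dot-product equals ∑ v²
  have key : ∀ (v : (Fin n ⊕ Fin n) → ℝ) (V : ℝ), V = ∑ k, v k ^ 2 → 0 < V →
      ((∑ k, S (Sum.inl j) k * v k = V) ∨ (∑ k, S (Sum.inr j) k * v k = V)) →
      r ^ 2 * V ≤ R ^ 2 := by
    intro v V hV hVpos hor
    have hsq : Real.sqrt V ^ 2 = V := Real.sq_sqrt hVpos.le
    have hs0 : 0 < Real.sqrt V := Real.sqrt_pos.mpr hVpos
    set t : ℝ := r / Real.sqrt V with ht
    have ht0 : 0 < t := div_pos hr hs0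
    set z : (Fin n ⊕ Fin n) → ℝ := t • v with hz
    have hzsum : ∑ i, z i ^ 2 = r ^ 2 := by
      have : ∑ i, z i ^ 2 = t ^ 2 * ∑ i, v i ^ 2 := by
        rw [Finset.mul_sum]
        refine Finset.sum_congr rfl fun i _ => ?_
        simp [hz, mul_pow]
      rw [this, ← hV, ht, div_pow, hsq]
      field_simp
    have hle := hmap z (le_of_eq hzsum)
    have hmv : ∀ w : Fin n ⊕ Fin n, S.mulVec z w = t * ∑ k, S w k * v k := by
      intro w
      rw [hz, Matrix.mulVec_smul]
      simp [Matrix.mulVec, dotProduct, Finset.mul_sum]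
    rw [hmv, hmv] at hle
    have htV : (t * V) ^ 2 = r ^ 2 * V := by
      rw [ht, mul_pow, div_pow, hsq]
      field_simp
    rcases hor with h | h <;> rw [h] at hle <;>
      nlinarith [sq_nonneg (t * ∑ k, S (Sum.inl j) k * v k),
        sq_nonneg (t * ∑ k, S (Sum.inr j) k * v k)]
  have hkeyA : r ^ 2 * A ≤ R ^ 2 := by
    refine key a A hA hApos (Or.inl ?_)
    rw [hA]; exact Finset.sum_congr rfl fun k _ => by rw [ha]; ring
  have hkeyB : r ^ 2 * B ≤ R ^ 2 := by
    refine key b B hB hBpos (Or.inr ?_)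
    rw [hB]; exact Finset.sum_congr rfl fun k _ => by rw [hb]; ring
  have h4 : r ^ 2 * r ^ 2 ≤ R ^ 2 * R ^ 2 := by
    nlinarith [mul_le_mul hkeyA hkeyB (by positivity) (by positivity),
      mul_le_mul_of_nonneg_left hAB (show (0:ℝ) ≤ r ^ 2 * r ^ 2 by positivity)]
  have h2 : r ^ 2 ≤ R ^ 2 := by nlinarith [h4, sq_nonneg (r ^ 2 + R ^ 2), sq_nonneg (r ^ 2 - R ^ 2)]
  nlinarith [h2, mul_pos hr hR]
end

section
/- Let X, Y be real symmetric n×n matrices with X positive definite, and let G = [[X + YX^{-1}Y, YX^{-1}],[X^{-1}Y, X^{-1}]]. Then G is symmetric, positive definite, and symplectic (G^T J G = J); moreover G = (SS^T)^{-1} where S = [[X^{-1/2}, 0],[−YX^{-1/2}, X^{1/2}]] ∈ Sp(n). -/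
open Matrix

lemma posDef_mul_transpose_self {m : Type*} [Fintype m] [DecidableEq m]
    (M : Matrix m m ℝ) (hM : IsUnit M) : (M * Mᵀ).PosDef := by
  rw [Matrix.posDef_iff_dotProduct_mulVec]
  constructor
  · have : (M * Mᵀ)ᴴ = M * Mᵀ := by
      simp [Matrix.conjTranspose_eq_transpose_of_trivial, Matrix.transpose_mul]
    exact this
  · intro x hx
    have hMt : IsUnit Mᵀ := by
      rw [Matrix.isUnit_iff_isUnit_det, Matrix.det_transpose,
        ← Matrix.isUnit_iff_isUnit_det]
      exact hM
    have hy : Mᵀ *ᵥ x ≠ 0 := by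
      have hinj : Function.Injective (Mᵀ).mulVec :=
        Matrix.mulVec_injective_iff_isUnit.mpr hMt
      intro h
      exact hx (hinj (by simpa using h))
    have : dotProduct (star x) ((M * Mᵀ) *ᵥ x) = dotProduct (Mᵀ *ᵥ x) (Mᵀ *ᵥ x) := by
      rw [← Matrix.mulVec_mulVec, Matrix.dotProduct_mulVec, ← Matrix.mulVec_transpose]
      simp [star_trivial]
    rw [this]
    have := Matrix.dotProduct_self_star_pos_iff (v := Mᵀ *ᵥ x) |>.mpr hy
    simpa [star_trivial] using this

/-- for `X, Y` real symmetric with `X` positive definite, the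
Wigner-transform matrix `G = [[X + YX⁻¹Y, YX⁻¹],[X⁻¹Y, X⁻¹]]` is symmetric,
positive definite and symplectic, and `G = (SSᵀ)⁻¹` where
`S = [[X^{-1/2}, 0],[−YX^{-1/2}, X^{1/2}]]` is symplectic (here `R = X^{1/2}`
is the positive definite square root of `X`). -/
theorem quantum_blobs_stmt18 {n : ℕ}
    (X Y R : Matrix (Fin n) (Fin n) ℝ)
    (hX : X.PosDef) (hXsym : Xᵀ = X) (hYsym : Yᵀ = Y)
    (hR : R.PosDef) (hRsym : Rᵀ = R) (hRR : R * R = X)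
    (G S : Matrix (Fin n ⊕ Fin n) (Fin n ⊕ Fin n) ℝ)
    (hG : G = Matrix.fromBlocks (X + Y * X⁻¹ * Y) (Y * X⁻¹) (X⁻¹ * Y) X⁻¹)
    (hSdef : S = Matrix.fromBlocks R⁻¹ 0 (-(Y * R⁻¹)) R) :
    Gᵀ = G ∧ G.PosDef ∧ IsSymplectic G ∧ IsSymplectic S ∧ G = (S * Sᵀ)⁻¹ := by
  have hXd : IsUnit X.det := (Matrix.isUnit_iff_isUnit_det X).mp hX.isUnit
  have hRd : IsUnit R.det := (Matrix.isUnit_iff_isUnit_det R).mp hR.isUnit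
  have hXi : X⁻¹ * X = 1 := Matrix.nonsing_inv_mul X hXd
  have hXi' : X * X⁻¹ = 1 := Matrix.mul_nonsing_inv X hXd
  have hRi : R⁻¹ * R = 1 := Matrix.nonsing_inv_mul R hRd
  have hRi' : R * R⁻¹ = 1 := Matrix.mul_nonsing_inv R hRd
  have hXit : (X⁻¹)ᵀ = X⁻¹ := by rw [Matrix.transpose_nonsing_inv, hXsym]
  have hRit : (R⁻¹)ᵀ = R⁻¹ := by rw [Matrix.transpose_nonsing_inv, hRsym]
  have hRR2 : R⁻¹ * R⁻¹ = X⁻¹ := by rw [← Matrix.mul_inv_rev, hRR]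
  -- cancellation helpers
  have c1 : ∀ B : Matrix (Fin n) (Fin n) ℝ, X⁻¹ * (X * B) = B := fun B => by
    rw [← Matrix.mul_assoc, hXi, Matrix.one_mul]
  have c2 : ∀ B : Matrix (Fin n) (Fin n) ℝ, X * (X⁻¹ * B) = B := fun B => by
    rw [← Matrix.mul_assoc, hXi', Matrix.one_mul]
  have c3 : ∀ B : Matrix (Fin n) (Fin n) ℝ, R⁻¹ * (R * B) = B := fun B => by
    rw [← Matrix.mul_assoc, hRi, Matrix.one_mul]
  have c4 : ∀ B : Matrix (Fin n) (Fin n) ℝ, R * (R⁻¹ * B) = B := fun B => by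
    rw [← Matrix.mul_assoc, hRi', Matrix.one_mul]
  have c5 : ∀ B : Matrix (Fin n) (Fin n) ℝ, R⁻¹ * (R⁻¹ * B) = X⁻¹ * B := fun B => by
    rw [← Matrix.mul_assoc, hRR2]
  have c6 : ∀ B : Matrix (Fin n) (Fin n) ℝ, R * (R * B) = X * B := fun B => by
    rw [← Matrix.mul_assoc, hRR]
  -- transpose of S
  have hSt : Sᵀ = Matrix.fromBlocks R⁻¹ (-(R⁻¹ * Y)) 0 R := by
    rw [hSdef, Matrix.fromBlocks_transpose, Matrix.fromBlocks_inj]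
    refine ⟨hRit, ?_, by simp, hRsym⟩
    rw [Matrix.transpose_neg, Matrix.transpose_mul, hRit, hYsym]
  -- S * Sᵀ computed
  have hA : S * Sᵀ =
      Matrix.fromBlocks X⁻¹ (-(X⁻¹ * Y)) (-(Y * X⁻¹)) (Y * X⁻¹ * Y + X) := by
    rw [hSt, hSdef, Matrix.fromBlocks_multiply, Matrix.fromBlocks_inj]
    refine ⟨?_, ?_, ?_, ?_⟩ <;>
      · simp [Matrix.mul_assoc, Matrix.mul_add, Matrix.add_mul, c1, c2, c3, c4, c5, c6,
          hRi, hRi', hXi, hXi', hRR2, hRR]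
        try abel
  -- G * (S * Sᵀ) = 1
  have hGA : G * (S * Sᵀ) = 1 := by
    rw [hG, hA, Matrix.fromBlocks_multiply, ← Matrix.fromBlocks_one, Matrix.fromBlocks_inj]
    refine ⟨?_, ?_, ?_, ?_⟩ <;>
      · simp [Matrix.mul_assoc, Matrix.mul_add, Matrix.add_mul, c1, c2, c3, c4, c5, c6,
          hRi, hRi', hXi, hXi', hRR2, hRR]
        try abel
  have hAG : (S * Sᵀ) * G = 1 := mul_eq_one_comm.mp hGA
  have hGinv : G = (S * Sᵀ)⁻¹ := (Matrix.inv_eq_left_inv hGA).symm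
  -- Gᵀ = G
  have hGsym : Gᵀ = G := by
    rw [hG, Matrix.fromBlocks_transpose, Matrix.fromBlocks_inj]
    refine ⟨?_, ?_, ?_, hXit⟩ <;>
      simp [Matrix.transpose_add, Matrix.transpose_mul, hXit, hXsym, hYsym, Matrix.mul_assoc]
  -- S is invertible
  have hSu : IsUnit S := by
    rw [hSdef, Matrix.isUnit_iff_isUnit_det, Matrix.det_fromBlocks_zero₁₂]
    exact (Matrix.isUnit_nonsing_inv_det R hRd).mul hRd
  -- S symplectic
  have hSsymp : IsSymplectic S := by
    unfold IsSymplectic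
    rw [hSt, hSdef, stdJ, Matrix.fromBlocks_multiply, Matrix.fromBlocks_multiply,
      Matrix.fromBlocks_inj]
    refine ⟨?_, ?_, ?_, ?_⟩ <;>
      · simp [Matrix.mul_assoc, Matrix.mul_add, Matrix.add_mul, c1, c2, c3, c4, c5, c6,
          hRi, hRi', hXi, hXi', hRR2, hRR]
        try abel
  -- S J Sᵀ = J
  have hSJSt : S * stdJ n * Sᵀ = stdJ n := by
    rw [hSt, hSdef, stdJ, Matrix.fromBlocks_multiply, Matrix.fromBlocks_multiply,
      Matrix.fromBlocks_inj]
    refine ⟨?_, ?_, ?_, ?_⟩ <;>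
      · simp [Matrix.mul_assoc, Matrix.mul_add, Matrix.add_mul, c1, c2, c3, c4, c5, c6,
          hRi, hRi', hXi, hXi', hRR2, hRR]
        try abel
  -- G symplectic
  have hGsymp : IsSymplectic G := by
    unfold IsSymplectic
    have hAJA : (S * Sᵀ) * stdJ n * (S * Sᵀ) = stdJ n := by
      have h : (S * Sᵀ) * stdJ n * (S * Sᵀ) = S * (Sᵀ * stdJ n * S) * Sᵀ := by
        simp only [Matrix.mul_assoc]
      rw [h, hSsymp, hSJSt]
    calc Gᵀ * stdJ n * G = G * stdJ n * G := by rw [hGsym]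
      _ = G * ((S * Sᵀ) * stdJ n * (S * Sᵀ)) * G := by rw [hAJA]
      _ = (G * (S * Sᵀ)) * stdJ n * ((S * Sᵀ) * G) := by simp only [Matrix.mul_assoc]
      _ = stdJ n := by rw [hGA, hAG, Matrix.one_mul, Matrix.mul_one]
  -- G positive definite
  have hGpd : G.PosDef := by
    rw [hGinv]
    exact (posDef_mul_transpose_self S hSu).inv
  exact ⟨hGsym, hGpd, hGsymp, hSsymp, hGinv⟩
end

section
/- Let F be a symmetric positive definite 2n×2n matrix with Williamson diagonalization F = S^T D S, D = diag(Λ_ω, Λ_ω), Λ_ω = diag(λ_{ω,1},...,λ_{ω,n}). Then the complex Hermitian matrix F^{-1} + iJ is positive semidefinite if and only if λ_{ω,j} ≤ 1 for all j; equivalently, the Hermitian matrix D^{-1} + iJ has eigenvalues ±1 + 1/λ_{ω,j}, which are all nonnegative exactly when each λ_{ω,j} ≤ 1. -/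
open Matrix
open scoped ComplexOrder

section Helpers

variable {m : Type*} [Fintype m] [DecidableEq m]

lemma QB19.psd_conj_iff {T T' M : Matrix m m ℂ} (h1 : T * T' = 1) (h2 : T' * T = 1) :
    (T * M * Tᴴ).PosSemidef ↔ M.PosSemidef := by
  constructor
  · intro h
    have h2' : Tᴴ * T'ᴴ = 1 := by rw [← conjTranspose_mul, h2, conjTranspose_one]
    have key := h.mul_mul_conjTranspose_same T'
    have e : T' * (T * M * Tᴴ) * T'ᴴ = M := by
      calc T' * (T * M * Tᴴ) * T'ᴴ = (T' * T) * M * (Tᴴ * T'ᴴ) := by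
            simp only [Matrix.mul_assoc]
        _ = M := by rw [h2, h2', Matrix.one_mul, Matrix.mul_one]
    rwa [e] at key
  · exact fun h => h.mul_mul_conjTranspose_same T

lemma QB19.spectrum_conj {T T' M : Matrix m m ℂ} (h1 : T * T' = 1) (h2 : T' * T = 1) :
    spectrum ℂ (T * M * T') = spectrum ℂ M := by
  have : T' = ((⟨T, T', h1, h2⟩ : (Matrix m m ℂ)ˣ)⁻¹ : (Matrix m m ℂ)ˣ) := rfl
  rw [this]
  exact spectrum.units_conjugate (u := ⟨T, T', h1, h2⟩)

lemma QB19.fromBlocks_diag_mul (f1 f2 f3 f4 g1 g2 g3 g4 : m → ℂ) :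
    fromBlocks (diagonal f1) (diagonal f2) (diagonal f3) (diagonal f4) *
      fromBlocks (diagonal g1) (diagonal g2) (diagonal g3) (diagonal g4) =
    fromBlocks (diagonal (f1 * g1 + f2 * g3)) (diagonal (f1 * g2 + f2 * g4))
      (diagonal (f3 * g1 + f4 * g3)) (diagonal (f3 * g2 + f4 * g4)) := by
  simp [fromBlocks_multiply, diagonal_mul_diagonal, diagonal_add]

lemma QB19.fromBlocks_diag_congr {u1 u2 u3 u4 v1 v2 v3 v4 : m → ℂ}
    (h1 : ∀ j, u1 j = v1 j) (h2 : ∀ j, u2 j = v2 j)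
    (h3 : ∀ j, u3 j = v3 j) (h4 : ∀ j, u4 j = v4 j) :
    fromBlocks (diagonal u1) (diagonal u2) (diagonal u3) (diagonal u4) =
    fromBlocks (diagonal v1) (diagonal v2) (diagonal v3) (diagonal v4) := by
  rw [funext h1, funext h2, funext h3, funext h4]

end Helpers

/-- let `F` be symmetric positive definite with Williamson
diagonalization `F = Sᵀ D S`, `D = diag(Λ_ω, Λ_ω)`, `Λ_ω = diag(d)`. Then the
Hermitian matrix `F⁻¹ + iJ` is positive semidefinite iff all symplectic
eigenvalues satisfy `d j ≤ 1`; equivalently, `D⁻¹ + iJ` has eigenvalues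
`±1 + 1/d j`, and it is positive semidefinite exactly when each `d j ≤ 1`. -/
theorem quantum_blobs_stmt19 {n : ℕ}
    (F S : Matrix (Fin n ⊕ Fin n) (Fin n ⊕ Fin n) ℝ)
    (hF : F.PosDef) (hFsym : Fᵀ = F) (hS : IsSymplectic S)
    (d : Fin n → ℝ) (hd : ∀ j, 0 < d j)
    (D : Matrix (Fin n ⊕ Fin n) (Fin n ⊕ Fin n) ℝ)
    (hD : D = Matrix.fromBlocks (Matrix.diagonal d) 0 0 (Matrix.diagonal d))
    (hW : F = Sᵀ * D * S) :
    ((F⁻¹.map Complex.ofReal + Complex.I • (stdJ n).map Complex.ofReal).PosSemidef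
        ↔ ∀ j, d j ≤ 1) ∧
    (spectrum ℂ (D⁻¹.map Complex.ofReal + Complex.I • (stdJ n).map Complex.ofReal)
        = {μ : ℂ | ∃ j, μ = ((d j)⁻¹ + 1 : ℝ) ∨ μ = ((d j)⁻¹ - 1 : ℝ)}) ∧
    ((D⁻¹.map Complex.ofReal + Complex.I • (stdJ n).map Complex.ofReal).PosSemidef
        ↔ ∀ j, d j ≤ 1) := by
  classical
  have hdne : ∀ j, (d j : ℝ) ≠ 0 := fun j => (hd j).ne'
  -- inverse of D
  have hDD' : D * fromBlocks (diagonal fun j => (d j)⁻¹) 0 0 (diagonal fun j => (d j)⁻¹) = 1 := by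
    rw [hD, fromBlocks_multiply]
    simp only [Matrix.mul_zero, Matrix.zero_mul, add_zero, zero_add, diagonal_mul_diagonal]
    rw [show (fun j => d j * (d j)⁻¹) = fun _ => (1 : ℝ) from
      funext fun j => mul_inv_cancel₀ (hdne j), diagonal_one, fromBlocks_one]
  have hDinv : D⁻¹ = fromBlocks (diagonal fun j => (d j)⁻¹) 0 0 (diagonal fun j => (d j)⁻¹) :=
    inv_eq_right_inv hDD'
  -- the complex matrix D⁻¹ + iJ in block-diagonal form
  set aC : Fin n → ℂ := fun j => (((d j)⁻¹ : ℝ) : ℂ) with haC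
  have hMD : D⁻¹.map Complex.ofReal + Complex.I • (stdJ n).map Complex.ofReal =
      fromBlocks (diagonal aC) (diagonal fun _ => Complex.I)
        (diagonal fun _ => -Complex.I) (diagonal aC) := by
    rw [hDinv, stdJ]
    ext i j
    rcases i with i | i <;> rcases j with j | j <;>
      rcases eq_or_ne i j with h | h <;>
      simp [Matrix.add_apply, Matrix.map_apply, diagonal_apply, one_apply, h, aC]
  -- eigenvector matrices P and its inverse Q
  set P : Matrix (Fin n ⊕ Fin n) (Fin n ⊕ Fin n) ℂ :=
    fromBlocks (diagonal fun _ => 1) (diagonal fun _ => 1)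
      (diagonal fun _ => Complex.I) (diagonal fun _ => -Complex.I) with hP
  set Q : Matrix (Fin n ⊕ Fin n) (Fin n ⊕ Fin n) ℂ :=
    fromBlocks (diagonal fun _ => 2⁻¹) (diagonal fun _ => -(Complex.I / 2))
      (diagonal fun _ => 2⁻¹) (diagonal fun _ => Complex.I / 2) with hQ
  have hone : (1 : Matrix (Fin n ⊕ Fin n) (Fin n ⊕ Fin n) ℂ) =
      fromBlocks (diagonal fun _ => 1) (diagonal fun _ => 0)
        (diagonal fun _ => 0) (diagonal fun _ => 1) := by
    rw [show (diagonal fun _ : Fin n => (0 : ℂ)) = 0 by simp,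
      show (diagonal fun _ : Fin n => (1 : ℂ)) = 1 from diagonal_one, fromBlocks_one]
  have hPQ : P * Q = 1 := by
    rw [hP, hQ, QB19.fromBlocks_diag_mul, hone]
    refine QB19.fromBlocks_diag_congr (fun j => ?_) (fun j => ?_) (fun j => ?_) (fun j => ?_) <;>
      simp only [Pi.add_apply, Pi.mul_apply] <;> ring_nf <;>
      simp [Complex.I_sq] <;> ring
  have hQP : Q * P = 1 := mul_eq_one_comm.mp hPQ
  -- the diagonalized form
  set b1 : Fin n → ℂ := fun j => aC j - 1 with hb1
  set b2 : Fin n → ℂ := fun j => aC j + 1 with hb2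
  set Lam : Matrix (Fin n ⊕ Fin n) (Fin n ⊕ Fin n) ℂ :=
    fromBlocks (diagonal b1) (diagonal fun _ => 0)
      (diagonal fun _ => 0) (diagonal b2) with hLam
  have hLamDiag : Lam = diagonal (Sum.elim b1 b2) := by
    rw [hLam, show (diagonal fun _ : Fin n => (0 : ℂ)) = 0 by simp, fromBlocks_diagonal]
  have hMP : (D⁻¹.map Complex.ofReal + Complex.I • (stdJ n).map Complex.ofReal) * P =
      P * Lam := by
    rw [hMD, hP, hLam, QB19.fromBlocks_diag_mul, QB19.fromBlocks_diag_mul]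
    refine QB19.fromBlocks_diag_congr (fun j => ?_) (fun j => ?_) (fun j => ?_) (fun j => ?_) <;>
      simp only [Pi.add_apply, Pi.mul_apply, hb1, hb2] <;> ring_nf <;>
      simp [Complex.I_sq] <;> ring
  have hMeq : D⁻¹.map Complex.ofReal + Complex.I • (stdJ n).map Complex.ofReal =
      P * Lam * Q := by
    calc D⁻¹.map Complex.ofReal + Complex.I • (stdJ n).map Complex.ofReal
        = (D⁻¹.map Complex.ofReal + Complex.I • (stdJ n).map Complex.ofReal) * (P * Q) := by
          rw [hPQ, Matrix.mul_one]
      _ = ((D⁻¹.map Complex.ofReal + Complex.I • (stdJ n).map Complex.ofReal) * P) * Q := by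
          rw [Matrix.mul_assoc]
      _ = P * Lam * Q := by rw [hMP]
  -- conjugate transpose of Q
  have hQH : Qᴴ = fromBlocks (diagonal fun _ => 2⁻¹) (diagonal fun _ => 2⁻¹)
      (diagonal fun _ => Complex.I / 2) (diagonal fun _ => -(Complex.I / 2)) := by
    rw [hQ, fromBlocks_conjTranspose]
    simp only [diagonal_conjTranspose]
    refine QB19.fromBlocks_diag_congr (fun j => ?_) (fun j => ?_) (fun j => ?_) (fun j => ?_) <;>
      simp [Pi.star_apply, Complex.ext_iff] <;> norm_num
  have hQQH : Q * Qᴴ = fromBlocks (diagonal fun _ => (2:ℂ)⁻¹) (diagonal fun _ => 0)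
      (diagonal fun _ => 0) (diagonal fun _ => (2:ℂ)⁻¹) := by
    rw [hQH, hQ, QB19.fromBlocks_diag_mul]
    refine QB19.fromBlocks_diag_congr (fun j => ?_) (fun j => ?_) (fun j => ?_) (fun j => ?_) <;>
      simp only [Pi.add_apply, Pi.mul_apply] <;> ring_nf <;>
      simp [Complex.I_sq] <;> ring
  have hQMQ : Q * (D⁻¹.map Complex.ofReal + Complex.I • (stdJ n).map Complex.ofReal) * Qᴴ =
      diagonal (Sum.elim (fun j => (aC j - 1) * 2⁻¹) (fun j => (aC j + 1) * 2⁻¹)) := by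
    rw [hMeq]
    calc Q * (P * Lam * Q) * Qᴴ = (Q * P) * (Lam * (Q * Qᴴ)) := by simp only [Matrix.mul_assoc]
      _ = Lam * (Q * Qᴴ) := by rw [hQP, Matrix.one_mul]
      _ = diagonal (Sum.elim (fun j => (aC j - 1) * 2⁻¹) (fun j => (aC j + 1) * 2⁻¹)) := by
          rw [hQQH, hLam, QB19.fromBlocks_diag_mul, ← fromBlocks_diagonal,
            show (0 : Matrix (Fin n) (Fin n) ℂ) = diagonal fun _ => 0 by simp]
          refine QB19.fromBlocks_diag_congr (fun j => ?_) (fun j => ?_)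
              (fun j => ?_) (fun j => ?_) <;>
            simp only [Pi.add_apply, Pi.mul_apply] <;> ring
  -- statement 3
  have hstmt3 : (D⁻¹.map Complex.ofReal + Complex.I • (stdJ n).map Complex.ofReal).PosSemidef
      ↔ ∀ j, d j ≤ 1 := by
    rw [← QB19.psd_conj_iff hQP hPQ, hQMQ, posSemidef_diagonal_iff]
    constructor
    · intro h j
      have hh := h (Sum.inl j)
      simp only [Sum.elim_inl] at hh
      rw [show (aC j - 1) * 2⁻¹ = ((((d j)⁻¹ - 1) * 2⁻¹ : ℝ) : ℂ) by
        simp only [haC]; push_cast; ring] at hh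
      have hr : (0:ℝ) ≤ ((d j)⁻¹ - 1) * 2⁻¹ := Complex.zero_le_real.mp hh
      have h1 : (1:ℝ) ≤ (d j)⁻¹ := by nlinarith
      exact (one_le_inv_iff₀.mp h1).2
    · intro h i
      rcases i with j | j
      · simp only [Sum.elim_inl]
        rw [show (aC j - 1) * 2⁻¹ = ((((d j)⁻¹ - 1) * 2⁻¹ : ℝ) : ℂ) by
          simp only [haC]; push_cast; ring]
        refine Complex.zero_le_real.mpr ?_
        have h1 : (1:ℝ) ≤ (d j)⁻¹ := one_le_inv_iff₀.mpr ⟨hd j, h j⟩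
        nlinarith
      · simp only [Sum.elim_inr]
        rw [show (aC j + 1) * 2⁻¹ = ((((d j)⁻¹ + 1) * 2⁻¹ : ℝ) : ℂ) by
          simp only [haC]; push_cast; ring]
        refine Complex.zero_le_real.mpr ?_
        have h0 : (0:ℝ) ≤ (d j)⁻¹ := le_of_lt (inv_pos.mpr (hd j))
        nlinarith
  -- statement 2: the spectrum
  have hstmt2 : spectrum ℂ (D⁻¹.map Complex.ofReal + Complex.I • (stdJ n).map Complex.ofReal)
      = {μ : ℂ | ∃ j, μ = ((d j)⁻¹ + 1 : ℝ) ∨ μ = ((d j)⁻¹ - 1 : ℝ)} := by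
    rw [hMeq, hLamDiag, QB19.spectrum_conj hPQ hQP, spectrum_diagonal]
    ext μ
    simp only [Set.mem_range, Set.mem_setOf_eq]
    constructor
    · rintro ⟨i, rfl⟩
      rcases i with j | j
      · exact ⟨j, Or.inr (by simp only [Sum.elim_inl, hb1, haC]; push_cast; ring)⟩
      · exact ⟨j, Or.inl (by simp only [Sum.elim_inr, hb2, haC]; push_cast; ring)⟩
    · rintro ⟨j, h | h⟩
      · exact ⟨Sum.inr j, by rw [h]; simp only [Sum.elim_inr, hb2, haC]; push_cast; ring⟩
      · exact ⟨Sum.inl j, by rw [h]; simp only [Sum.elim_inl, hb1, haC]; push_cast; ring⟩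
  -- statement 1: the F part
  have hS' : Sᵀ * stdJ n * S = stdJ n := hS
  have hJ2 : stdJ n * stdJ n = -1 := by
    rw [stdJ, fromBlocks_multiply]
    simp [← fromBlocks_one, fromBlocks_neg]
  set B : Matrix (Fin n ⊕ Fin n) (Fin n ⊕ Fin n) ℝ := -(stdJ n) * Sᵀ * stdJ n with hB
  have hBS : B * S = 1 := by
    calc B * S = -(stdJ n) * (Sᵀ * stdJ n * S) := by
          rw [hB]; simp only [Matrix.neg_mul, Matrix.mul_assoc]
      _ = -(stdJ n * stdJ n) := by rw [hS', Matrix.neg_mul]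
      _ = 1 := by rw [hJ2, neg_neg]
  have hSB : S * B = 1 := mul_eq_one_comm.mp hBS
  have hSJS : S * stdJ n * Sᵀ = stdJ n := by
    have e : -(S * (stdJ n * (Sᵀ * stdJ n))) = 1 := by
      calc -(S * (stdJ n * (Sᵀ * stdJ n))) = S * B := by
            rw [hB]; simp only [Matrix.neg_mul, Matrix.mul_neg, Matrix.mul_assoc]
        _ = 1 := hSB
    have e2 : (S * stdJ n * Sᵀ) * stdJ n = -1 := by
      have h' : (S * stdJ n * Sᵀ) * stdJ n = S * (stdJ n * (Sᵀ * stdJ n)) := by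
        simp only [Matrix.mul_assoc]
      rw [h']
      exact neg_eq_iff_eq_neg.mp e
    calc S * stdJ n * Sᵀ = (S * stdJ n * Sᵀ) * (stdJ n * -(stdJ n)) := by
          rw [show stdJ n * -(stdJ n) = 1 by rw [Matrix.mul_neg, hJ2, neg_neg], Matrix.mul_one]
      _ = ((S * stdJ n * Sᵀ) * stdJ n) * -(stdJ n) := by simp only [Matrix.mul_assoc]
      _ = (-1) * -(stdJ n) := by rw [e2]
      _ = stdJ n := by simp
  have hBJB : B * stdJ n * Bᵀ = stdJ n := by
    conv_lhs => rw [show stdJ n = S * stdJ n * Sᵀ from hSJS.symm]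
    calc B * (S * stdJ n * Sᵀ) * Bᵀ = (B * S) * stdJ n * (Sᵀ * Bᵀ) := by
          simp only [Matrix.mul_assoc]
      _ = stdJ n := by
          rw [hBS, ← transpose_mul, hBS, transpose_one, Matrix.one_mul, Matrix.mul_one]
  have hFinv : F⁻¹ = B * D⁻¹ * Bᵀ := by
    apply inv_eq_right_inv
    rw [hW]
    calc Sᵀ * D * S * (B * D⁻¹ * Bᵀ)
        = Sᵀ * (D * ((S * B) * (D⁻¹ * Bᵀ))) := by simp only [Matrix.mul_assoc]
      _ = Sᵀ * (D * (D⁻¹ * Bᵀ)) := by rw [hSB, Matrix.one_mul]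
      _ = (Sᵀ * (D * D⁻¹)) * Bᵀ := by simp only [Matrix.mul_assoc]
      _ = Sᵀ * Bᵀ := by rw [hDinv, hDD', Matrix.mul_one]
      _ = 1 := by rw [← transpose_mul, hBS, transpose_one]
  have hmapmul : ∀ X Y : Matrix (Fin n ⊕ Fin n) (Fin n ⊕ Fin n) ℝ,
      (X * Y).map Complex.ofReal = X.map Complex.ofReal * Y.map Complex.ofReal := fun X Y =>
    Matrix.map_mul (f := Complex.ofRealHom)
  have hmapT : ∀ X : Matrix (Fin n ⊕ Fin n) (Fin n ⊕ Fin n) ℝ,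
      (Xᵀ).map Complex.ofReal = (X.map Complex.ofReal)ᴴ := fun X => by
    ext i j
    simp [conjTranspose_apply, Matrix.map_apply, Complex.conj_ofReal]
  have hScB : (B.map Complex.ofReal) * (S.map Complex.ofReal) = 1 := by
    rw [← hmapmul, hBS, Matrix.map_one _ Complex.ofReal_zero Complex.ofReal_one]
  have hSBc : (S.map Complex.ofReal) * (B.map Complex.ofReal) = 1 := by
    rw [← hmapmul, hSB, Matrix.map_one _ Complex.ofReal_zero Complex.ofReal_one]
  have hconj : F⁻¹.map Complex.ofReal + Complex.I • (stdJ n).map Complex.ofReal =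
      (B.map Complex.ofReal) *
        (D⁻¹.map Complex.ofReal + Complex.I • (stdJ n).map Complex.ofReal) *
        (B.map Complex.ofReal)ᴴ := by
    rw [hFinv, hmapmul, hmapmul, hmapT]
    conv_lhs =>
      rw [show (stdJ n).map Complex.ofReal =
          (B.map Complex.ofReal) * ((stdJ n).map Complex.ofReal) * (B.map Complex.ofReal)ᴴ from by
        rw [← hmapT, ← hmapmul, ← hmapmul, hBJB]]
    simp only [Matrix.mul_add, Matrix.add_mul, Matrix.mul_smul, Matrix.smul_mul,
      Matrix.mul_assoc]
  have hstmt1 : (F⁻¹.map Complex.ofReal + Complex.I • (stdJ n).map Complex.ofReal).PosSemidef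
      ↔ ∀ j, d j ≤ 1 := by
    rw [hconj, QB19.psd_conj_iff hScB hSBc]
    exact hstmt3
  exact ⟨hstmt1, hstmt2, hstmt3⟩
end
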